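/- arXiv:1611.09721 — 5 statements merged into one kernel-verified Lean document; each statement's English description precedes it below -/
import Mathlib

section
/- Let R be the K-algebra generated by x_1,...,x_n subject to the n(n-1)/2 relations x_j x_i - q_{ij} x_i x_j = r_{ij} for 1 ≤ i < j ≤ n. Then the following are equivalent: (1) the standard monomials x_1^{a_1} x_2^{a_2} ... x_n^{a_n} (with a_1,...,a_n ranging over the non-negative integers) form a K-basis of R; (2) whenever i, j, k ∈ {1,...,n} are distinct and r_{ij} ≠ 0, one has q_{ik} = q_{kj} = q_{jk}^{-1}; (3) for every permutation σ of {1,...,n}, the monomials x_{σ(1)}^{a_1} x_{σ(2)}^{a_2} ... x_{σ(n)}^{a_n} form a K-basis of R. -/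
noncomputable section

open FreeAlgebra

/-- The `n(n-1)/2` defining relations `x_j x_i - q_{ij} x_i x_j = r_{ij}` for `i < j`
(generators indexed `0,…,n-1`, corresponding to `x_1,…,x_n`). -/
inductive PresRel (K : Type) [Field K] (n : ℕ) (q r : Fin n → Fin n → K) :
    FreeAlgebra K (Fin n) → FreeAlgebra K (Fin n) → Prop
  | mk (i j : Fin n) (hij : i < j) :
      PresRel K n q r (ι K j * ι K i)
        (q i j • (ι K i * ι K j) + algebraMap K (FreeAlgebra K (Fin n)) (r i j))

/-- The standard monomial `x_1^{a_1} ⋯ x_n^{a_n}` (product taken in increasing index order). -/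
def stdMonomial {R : Type} [Ring R] (n : ℕ) (x : Fin n → R) (a : Fin n → ℕ) : R :=
  ((List.finRange n).map (fun i => x i ^ a i)).prod

/-- The family of standard monomials (indexed by exponent vectors) is a `K`-basis of `R`. -/
def IsMonBasis (K : Type) [Field K] {R : Type} [Ring R] [Algebra K R] (n : ℕ)
    (x : Fin n → R) : Prop :=
  LinearIndependent K (fun a : Fin n → ℕ => stdMonomial n x a) ∧
    Submodule.span K (Set.range (fun a : Fin n → ℕ => stdMonomial n x a)) = ⊤

/-!
The standard monomials always span: rewriting `x_i x_j = q_{ji} x_j x_i + r_{ji}` for `j < i`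
moves a generator to the left of a smaller one, so `x_i` times a standard monomial of degree `m`
is a combination of standard monomials of degree at most `m + 1`, by induction on `m` and then
on `i`.

Linear independence forces the condition: reducing the overlap `x_c x_b x_a` (`a < b < c`) in the
two possible ways gives the linear relation
`r_{bc} (q_{ab} q_{ac} - 1) x_a + r_{ac} (q_{ab} - q_{bc}) x_b + r_{ab} (1 - q_{ac} q_{bc}) x_c`
`= 0`.

Conversely, under the condition the normal-form rule for `x_i x^a` defines operators on the vector
space with basis the exponent vectors, and these satisfy the defining relations. In the resulting
representation `x^a` sends `δ_0` to `δ_a`, so the standard monomials are independent. The condition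
is invariant under renumbering the generators, which is an isomorphism of the presented algebras;
this gives the statement for permuted monomials.
-/

section StdMonomial

variable {A : Type} [Ring A]

lemma stdMonomial_succ {n : ℕ} (x : Fin (n + 1) → A) (a : Fin (n + 1) → ℕ) :
    stdMonomial (n + 1) x a =
      x 0 ^ a 0 * stdMonomial n (fun i => x i.succ) (fun i => a i.succ) := by
  simp [stdMonomial, List.finRange_succ, List.map_map, Function.comp_def]

lemma stdMonomial_zero {n : ℕ} (x : Fin n → A) : stdMonomial n x 0 = 1 := by
  simp [stdMonomial]

lemma stdMonomial_add_single {n : ℕ} (x : Fin n → A) {a : Fin n → ℕ} {j : Fin n}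
    (ha : ∀ l < j, a l = 0) : stdMonomial n x (a + Pi.single j 1) = x j * stdMonomial n x a := by
  induction n with
  | zero => exact j.elim0
  | succ n ih =>
    rw [stdMonomial_succ, stdMonomial_succ]
    cases j using Fin.cases with
    | zero =>
      simp [pow_succ', mul_assoc, Fin.succ_ne_zero]
    | succ j =>
      have htail : (fun i => (a + Pi.single j.succ 1 : Fin (n + 1) → ℕ) i.succ) =
          (fun i => a i.succ) + Pi.single j 1 := by
        ext i
        simp [Pi.single_apply]
      rw [htail, ih _ fun l hl => ha l.succ (Fin.succ_lt_succ_iff.2 hl)]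
      simp [ha 0 (Fin.succ_pos j), (Fin.succ_ne_zero j).symm]

lemma stdMonomial_single {n : ℕ} (x : Fin n → A) (i : Fin n) :
    stdMonomial n x (Pi.single i 1) = x i := by
  simpa [stdMonomial_zero] using stdMonomial_add_single x (a := 0) (j := i) (fun _ _ => rfl)

lemma map_stdMonomial {B F : Type} [Ring B] [FunLike F A B] [MonoidHomClass F A B] (f : F)
    {n : ℕ} (x : Fin n → A) (a : Fin n → ℕ) :
    f (stdMonomial n x a) = stdMonomial n (fun i => f (x i)) a := by
  simp [stdMonomial, map_list_prod, List.map_map, Function.comp_def]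

end StdMonomial

lemma IsMonBasis.map_algEquiv {K A B : Type} [Field K] [Ring A] [Ring B] [Algebra K A]
    [Algebra K B] {n : ℕ} {x : Fin n → A} (h : IsMonBasis K n x) (e : A ≃ₐ[K] B) :
    IsMonBasis K n (fun i => e (x i)) := by
  have he : (fun a => stdMonomial n (fun i => e (x i)) a) =
      e.toLinearEquiv.toLinearMap ∘ fun a => stdMonomial n x a :=
    funext fun a => (map_stdMonomial e x a).symm
  refine ⟨he ▸ h.1.map' _ e.toLinearEquiv.ker, ?_⟩
  rw [he, Set.range_comp, Submodule.span_image, h.2, Submodule.map_top, LinearEquiv.range]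

namespace PBW

open Finset

section Exponents

variable {n : ℕ}

lemma sum_add_single (a : Fin n → ℕ) (j : Fin n) :
    ∑ l, (a + Pi.single j 1 : Fin n → ℕ) l = ∑ l, a l + 1 := by
  simp [Finset.sum_add_distrib]

lemma single_le_of_ne_zero {a : Fin n → ℕ} {k : Fin n} (h : a k ≠ 0) :
    (Pi.single k 1 : Fin n → ℕ) ≤ a := fun l => by
  rcases eq_or_ne l k with rfl | hl <;> simp [*, Nat.one_le_iff_ne_zero]

lemma sub_single_add_single_comm (a : Fin n → ℕ) {k j : Fin n} (h : k ≠ j) :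
    a - Pi.single k 1 + Pi.single j 1 = a + Pi.single j 1 - Pi.single k 1 := by
  ext l
  rcases eq_or_ne l k with rfl | hk
  · simp [h]
  · rcases eq_or_ne l j with rfl | hj <;> simp [*]

lemma exists_eq_add_single {a : Fin n → ℕ} (ha : a ≠ 0) :
    ∃ (j : Fin n) (b : Fin n → ℕ), (∀ l < j, b l = 0) ∧ a = b + Pi.single j 1 := by
  obtain ⟨j, hj, hmin⟩ := (univ.filter fun l => a l ≠ 0).exists_min_image id
    (by simpa [Finset.Nonempty, Function.ne_iff] using ha)
  simp only [mem_filter, mem_univ, true_and, id] at hj hmin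
  refine ⟨j, a - Pi.single j 1, fun l hl => ?_, ?_⟩
  · have : a l = 0 := by_contra fun h => (hmin l h).not_gt hl
    simp [this]
  · exact (tsub_add_cancel_of_le (single_le_of_ne_zero hj)).symm

theorem induction_add_single {P : (Fin n → ℕ) → Prop} (zero : P 0)
    (add_single : ∀ (j : Fin n) (b : Fin n → ℕ), (∀ l < j, b l = 0) → P b →
      P (b + Pi.single j 1))
    (a : Fin n → ℕ) : P a := by
  induction h : ∑ l, a l generalizing a with
  | zero =>
    obtain rfl : a = 0 := funext fun l => by simpa using (Finset.sum_eq_zero_iff.1 h) l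
    exact zero
  | succ m ih =>
    obtain ⟨j, b, hb, rfl⟩ := exists_eq_add_single (a := a) (by rintro rfl; simp at h)
    exact add_single j b hb (ih b (by rw [sum_add_single] at h; omega))

end Exponents

section Spanning

variable (K : Type) {A : Type} [CommRing K] [Ring A] [Algebra K A] {n : ℕ}

def stdSpan (x : Fin n → A) (m : ℕ) : Submodule K A :=
  Submodule.span K (stdMonomial n x '' {a | ∑ l, a l ≤ m})

variable {K} {x : Fin n → A} {q r : Fin n → Fin n → K}

lemma stdMonomial_mem_stdSpan {a : Fin n → ℕ} {m : ℕ} (ha : ∑ l, a l ≤ m) :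
    stdMonomial n x a ∈ stdSpan K x m :=
  Submodule.subset_span ⟨a, ha, rfl⟩

lemma stdSpan_mono (x : Fin n → A) : Monotone (stdSpan K x) :=
  fun _ _ h => Submodule.span_mono (Set.image_mono fun _ ha => le_trans ha h)

lemma gen_mul_stdMonomial_mem_stdSpan {i : Fin n} {a : Fin n → ℕ} {m : ℕ}
    (hi : ∀ l < i, a l = 0) (ha : ∑ l, a l ≤ m) :
    x i * stdMonomial n x a ∈ stdSpan K x (m + 1) := by
  rw [← stdMonomial_add_single x hi]
  exact stdMonomial_mem_stdSpan (by rw [sum_add_single]; omega)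

theorem gen_mul_mem_stdSpan
    (hx : ∀ i j, i < j → x j * x i = q i j • (x i * x j) + algebraMap K A (r i j))
    (m : ℕ) (i : Fin n) {z : A} (hz : z ∈ stdSpan K x m) : x i * z ∈ stdSpan K x (m + 1) := by
  induction m using Nat.strong_induction_on generalizing i z with | _ m IHm
  induction i using WellFoundedLT.induction generalizing z with | _ i IHi
  suffices h : stdSpan K x m ≤ (stdSpan K x (m + 1)).comap (LinearMap.mulLeft K (x i)) from h hz
  refine Submodule.span_le.2 ?_
  rintro _ ⟨a, ha, rfl⟩
  rcases eq_or_ne a 0 with rfl | ha0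
  · exact gen_mul_stdMonomial_mem_stdSpan (fun _ _ => rfl) ha
  obtain ⟨j, b, hb, rfl⟩ := exists_eq_add_single ha0
  have hbm : ∑ l, b l + 1 ≤ m := sum_add_single b j ▸ ha
  rcases le_or_gt i j with hij | hji
  · refine gen_mul_stdMonomial_mem_stdSpan (fun l hl => ?_) ha
    simp [hb l (hl.trans_le hij), (hl.trans_le hij).ne]
  -- `x_i x_j x^b = q_{ji} x_j (x_i x^b) + r_{ji} x^b`, and `x_i x^b` has degree at most `m`
  have hib : x i * stdMonomial n x b ∈ stdSpan K x m :=
    stdSpan_mono x (by omega) (IHm _ (by omega) i (stdMonomial_mem_stdSpan le_rfl))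
  rw [SetLike.mem_coe, Submodule.mem_comap, LinearMap.mulLeft_apply,
    stdMonomial_add_single x hb, ← mul_assoc, hx j i hji, add_mul, smul_mul_assoc, mul_assoc,
    ← Algebra.smul_def]
  exact add_mem (Submodule.smul_mem _ _ (IHi j hji hib))
    (Submodule.smul_mem _ _ (stdMonomial_mem_stdSpan (by omega)))

theorem span_stdMonomial_eq_top
    (hx : ∀ i j, i < j → x j * x i = q i j • (x i * x j) + algebraMap K A (r i j))
    (hgen : Algebra.adjoin K (Set.range x) = ⊤) :
    Submodule.span K (Set.range (stdMonomial n x)) = ⊤ := by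
  set M := Submodule.span K (Set.range (stdMonomial n x))
  have hle : ∀ m, stdSpan K x m ≤ M := fun m =>
    Submodule.span_mono (Set.image_subset_range _ _)
  have hgen_mul : ∀ i, M ≤ M.comap (LinearMap.mulLeft K (x i)) := fun i =>
    Submodule.span_le.2 <| by
      rintro _ ⟨a, rfl⟩
      exact hle _ (gen_mul_mem_stdSpan hx _ i (stdMonomial_mem_stdSpan le_rfl))
  have hmul : ∀ z ∈ Algebra.adjoin K (Set.range x), ∀ w ∈ M, z * w ∈ M := by
    intro z hz
    induction hz using Algebra.adjoin_induction with
    | mem _ hz =>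
      obtain ⟨i, rfl⟩ := hz
      exact hgen_mul i
    | algebraMap c => exact fun w hw => by rw [← Algebra.smul_def]; exact M.smul_mem c hw
    | add _ _ _ _ h₁ h₂ => exact fun w hw => by rw [add_mul]; exact add_mem (h₁ w hw) (h₂ w hw)
    | mul _ _ _ _ h₁ h₂ => exact fun w hw => by rw [mul_assoc]; exact h₁ _ (h₂ w hw)
  have hone : (1 : A) ∈ M := stdMonomial_zero x ▸ Submodule.subset_span ⟨0, rfl⟩
  refine eq_top_iff.2 fun z _ => ?_
  simpa using hmul z (hgen ▸ Algebra.mem_top) 1 hone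

end Spanning

section Overlap

variable {K A : Type} [CommRing K] [Ring A] [Algebra K A] {n : ℕ} {x : Fin n → A}
  {q r : Fin n → Fin n → K}

/-- Reducing `x_c x_b x_a` (with `a < b < c`) to normal form in the two possible ways. -/
theorem overlap_relation
    (hx : ∀ i j, i < j → x j * x i = q i j • (x i * x j) + algebraMap K A (r i j))
    {a b c : Fin n} (hab : a < b) (hbc : b < c) :
    (r b c * (q a b * q a c - 1)) • x a + (r a c * (q a b - q b c)) • x b
      + (r a b * (1 - q a c * q b c)) • x c = 0 := by
  have cc_mul : ∀ (t : K) (y : A), algebraMap K A t * y = t • y :=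
    fun t y => (Algebra.smul_def t y).symm
  have mul_cc : ∀ (t : K) (y : A), y * algebraMap K A t = t • y :=
    fun t y => by rw [← Algebra.commutes, ← Algebra.smul_def]
  have w1 : x c * (x b * x a) = (q a b * q a c * q b c) • (x a * (x b * x c))
      + (q a b * q a c * r b c) • x a + (q a b * r a c) • x b + r a b • x c := by
    rw [hx a b hab]
    simp only [mul_add, mul_smul_comm, mul_cc]
    rw [← mul_assoc, hx a c (hab.trans hbc)]
    simp only [add_mul, smul_mul_assoc, cc_mul, smul_smul, smul_add, mul_assoc]
    rw [hx b c hbc]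
    simp only [mul_add, mul_smul_comm, mul_cc, smul_smul, smul_add]
    module
  have w2 : (x c * x b) * x a = (q a b * q a c * q b c) • (x a * (x b * x c))
      + (q b c * q a c * r a b) • x c + (q b c * r a c) • x b + r b c • x a := by
    rw [hx b c hbc]
    simp only [add_mul, smul_mul_assoc, cc_mul]
    rw [mul_assoc, hx a c (hab.trans hbc)]
    simp only [mul_add, mul_smul_comm, mul_cc, smul_smul, smul_add, ← mul_assoc]
    rw [hx a b hab]
    simp only [add_mul, smul_mul_assoc, cc_mul, smul_smul, smul_add, mul_assoc]
    module
  rw [mul_assoc, w1] at w2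
  linear_combination (norm := module) w2

lemma coeffs_eq_zero_of_linearIndependent (hli : LinearIndependent K (stdMonomial n x))
    {u v w : Fin n} (huv : u ≠ v) (hvw : v ≠ w) (huw : u ≠ w) {α β γ : K}
    (h : α • x u + β • x v + γ • x w = 0) : α = 0 ∧ β = 0 ∧ γ = 0 := by
  have hsingle : Function.Injective fun i : Fin n => (Pi.single i 1 : Fin n → ℕ) :=
    fun a b h => by simpa [Pi.single_apply] using congrFun h a
  have hinj : Function.Injective ![u, v, w] := by
    intro s t h
    fin_cases s <;> fin_cases t <;> simp_all [eq_comm]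
  have hli3 := Fintype.linearIndependent_iff.1 (hli.comp _ (hsingle.comp hinj)) ![α, β, γ]
    (by simpa [Fin.sum_univ_three, stdMonomial_single, add_assoc] using h)
  exact ⟨hli3 0, hli3 1, hli3 2⟩

end Overlap

section Criterion

variable {K A : Type} [Field K] [Ring A] [Algebra K A] {n : ℕ} (q r : Fin n → Fin n → K)

def Condition : Prop :=
  ∀ i j k : Fin n, i ≠ j → j ≠ k → i ≠ k → r i j ≠ 0 → q i k = (q j k)⁻¹ ∧ q k j = (q j k)⁻¹

variable {q r}

lemma condition_iff (hq0 : ∀ i j : Fin n, i ≠ j → q i j ≠ 0)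
    (hqinv : ∀ i j : Fin n, i ≠ j → q j i = (q i j)⁻¹) :
    Condition q r ↔
      ∀ i j k : Fin n, i ≠ j → j ≠ k → i ≠ k → r i j ≠ 0 → q i k * q j k = 1 := by
  refine forall₄_congr fun i j k hij => forall₃_congr fun hjk hik hr => ?_
  rw [← hqinv j k hjk, and_iff_left rfl, hqinv j k hjk, mul_eq_one_iff_eq_inv₀ (hq0 j k hjk)]

namespace Condition

variable (hc : Condition q r) (hq0 : ∀ i j : Fin n, i ≠ j → q i j ≠ 0)
  (hqinv : ∀ i j : Fin n, i ≠ j → q j i = (q i j)⁻¹)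
include hc hq0

lemma mul_eq_one {i j k : Fin n} (hij : i ≠ j) (hjk : j ≠ k) (hik : i ≠ k) (hr : r i j ≠ 0) :
    q i k * q j k = 1 := by
  rw [(hc i j k hij hjk hik hr).1, inv_mul_cancel₀ (hq0 j k hjk)]

include hqinv

lemma mul_eq_one' {i j k : Fin n} (hij : i ≠ j) (hjk : j ≠ k) (hik : i ≠ k) (hr : r i j ≠ 0) :
    q k i * q k j = 1 := by
  rw [hqinv i k hik, hqinv j k hjk, ← mul_inv, hc.mul_eq_one hq0 hij hjk hik hr, inv_one]

lemma eq_of_ne_zero {i j k : Fin n} (hkj : k ≠ j) (hji : j ≠ i) (hki : k ≠ i) (hr : r k j ≠ 0) :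
    q k i = q i j := by
  have h := hc.mul_eq_one hq0 hkj hji hki hr
  rwa [hqinv i j hji.symm, mul_inv_eq_one₀ (hq0 i j hji.symm)] at h

end Condition

theorem condition_of_linearIndependent {x : Fin n → A}
    (hx : ∀ i j, i < j → x j * x i = q i j • (x i * x j) + algebraMap K A (r i j))
    (hli : LinearIndependent K (stdMonomial n x))
    (hq0 : ∀ i j : Fin n, i ≠ j → q i j ≠ 0)
    (hqinv : ∀ i j : Fin n, i ≠ j → q j i = (q i j)⁻¹)
    (hrinv : ∀ i j : Fin n, i ≠ j → r j i = -(q i j)⁻¹ * r i j) :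
    Condition q r := by
  have sorted : ∀ {a b c : Fin n}, a < b → b < c →
      r b c * (q a b * q a c - 1) = 0 ∧ r a c * (q a b - q b c) = 0 ∧
        r a b * (1 - q a c * q b c) = 0 := fun hab hbc =>
    coeffs_eq_zero_of_linearIndependent hli hab.ne hbc.ne (hab.trans hbc).ne
      (overlap_relation hx hab hbc)
  have key : ∀ i j k : Fin n, i < j → k ≠ i → k ≠ j → r i j ≠ 0 → q i k * q j k = 1 := by
    intro i j k hij hki hkj hr
    rcases lt_trichotomy k i with hk | rfl | hk
    · have h := (mul_eq_zero.1 (sorted hk hij).1).resolve_left hr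
      rw [hqinv k i hki, hqinv k j hkj, ← mul_inv, sub_eq_zero.1 h, inv_one]
    · exact absurd rfl hki
    rcases lt_trichotomy k j with hk' | rfl | hk'
    · have h := (mul_eq_zero.1 (sorted hk hk').2.1).resolve_left hr
      rw [sub_eq_zero.1 h, hqinv k j hkj, mul_inv_cancel₀ (hq0 k j hkj)]
    · exact absurd rfl hkj
    · have h := (mul_eq_zero.1 (sorted hij hk').2.2).resolve_left hr
      exact (sub_eq_zero.1 h).symm
  refine (condition_iff hq0 hqinv).2 fun i j k hij hjk hik hr => ?_
  rcases hij.lt_or_gt with h | h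
  · exact key i j k h hik.symm hjk.symm hr
  · have hr' : r j i ≠ 0 := by simp [hrinv i j hij, hq0 i j hij, hr]
    rw [mul_comm]
    exact key j i k h hjk.symm hik.symm hr'

end Criterion

section Quotient

variable {K : Type} [Field K] {n : ℕ} (q r : Fin n → Fin n → K)

def gen (i : Fin n) : RingQuot (PresRel K n q r) :=
  RingQuot.mkAlgHom K (PresRel K n q r) (ι K i)

variable {q r}

lemma gen_mul_gen {i j : Fin n} (hij : i < j) :
    gen q r j * gen q r i = q i j • (gen q r i * gen q r j) + algebraMap K _ (r i j) := by
  simpa [gen] using RingQuot.mkAlgHom_rel K (PresRel.mk (q := q) (r := r) i j hij)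

lemma gen_mul_gen_of_ne (hq0 : ∀ i j : Fin n, i ≠ j → q i j ≠ 0)
    (hqinv : ∀ i j : Fin n, i ≠ j → q j i = (q i j)⁻¹)
    (hrinv : ∀ i j : Fin n, i ≠ j → r j i = -(q i j)⁻¹ * r i j) {i j : Fin n} (hij : i ≠ j) :
    gen q r j * gen q r i = q i j • (gen q r i * gen q r j) + algebraMap K _ (r i j) := by
  rcases hij.lt_or_gt with h | h
  · exact gen_mul_gen h
  have hq : q i j ≠ 0 := hq0 i j hij
  rw [gen_mul_gen h, smul_add, smul_smul, hqinv i j hij, mul_inv_cancel₀ hq, one_smul,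
    Algebra.smul_def, ← map_mul, add_assoc, ← map_add, hrinv i j hij]
  field_simp
  simp

lemma adjoin_range_gen : Algebra.adjoin K (Set.range (gen q r)) = ⊤ := by
  rw [show gen q r = RingQuot.mkAlgHom K (PresRel K n q r) ∘ ι K from rfl, Set.range_comp,
    ← AlgHom.map_adjoin, FreeAlgebra.adjoin_range_ι, Algebra.map_top,
    AlgHom.range_eq_top]
  exact RingQuot.mkAlgHom_surjective K _

variable {A : Type} [Ring A] [Algebra K A]

def liftOfRel (y : Fin n → A)
    (hy : ∀ i j, i < j → y j * y i = q i j • (y i * y j) + algebraMap K A (r i j)) :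
    RingQuot (PresRel K n q r) →ₐ[K] A :=
  RingQuot.liftAlgHom K ⟨FreeAlgebra.lift K y, by
    rintro _ _ ⟨i, j, hij⟩
    simpa using hy i j hij⟩

@[simp]
lemma liftOfRel_gen (y : Fin n → A)
    (hy : ∀ i j, i < j → y j * y i = q i j • (y i * y j) + algebraMap K A (r i j)) (i : Fin n) :
    liftOfRel y hy (gen q r i) = y i := by
  simp [liftOfRel, gen]

lemma algHom_ext_gen {f g : RingQuot (PresRel K n q r) →ₐ[K] A}
    (h : ∀ i, f (gen q r i) = g (gen q r i)) : f = g :=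
  RingQuot.ringQuot_ext' K f g (FreeAlgebra.hom_ext (funext h))

end Quotient

section GeomSum

variable {K : Type} [Field K] {t : K}

lemma pow_mul_geom_sum_inv (ht : t ≠ 0) (m : ℕ) :
    t ^ m * ∑ s ∈ range m, t⁻¹ ^ s = t * ∑ s ∈ range m, t ^ s := by
  induction m with
  | zero => simp
  | succ m ih =>
    have hpow : t ^ m * t⁻¹ ^ m = 1 := by rw [← mul_pow, mul_inv_cancel₀ ht, one_pow]
    rw [geom_sum_succ', geom_sum_succ]
    linear_combination t * ih + t * hpow

lemma geom_sum_mul_geom_sum_inv (ht : t ≠ 0) (m : ℕ) :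
    (∑ s ∈ range (m + 1), t ^ s) * ∑ s ∈ range m, t⁻¹ ^ s =
      t * (∑ s ∈ range (m + 1), t⁻¹ ^ s) * ∑ s ∈ range m, t ^ s := by
  refine mul_left_cancel₀ (pow_ne_zero (m + 1) ht) ?_
  linear_combination (t * ∑ s ∈ range (m + 1), t ^ s) * pow_mul_geom_sum_inv ht m
    - (t * ∑ s ∈ range m, t ^ s) * pow_mul_geom_sum_inv ht (m + 1)

end GeomSum

section Representation

variable {K : Type} [Field K] {n : ℕ} (q r : Fin n → Fin n → K)

def commFactor (i k : Fin n) (a : Fin n → ℕ) : K :=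
  ∏ l ∈ Iio k, q l i ^ a l

def lowerCoeff (i k : Fin n) (a : Fin n → ℕ) : K :=
  r k i * (∑ s ∈ range (a k), q k i ^ s) * commFactor q i k a

/-- The normal form of `x_i x^a`: moving `x_i` leftwards past `x_k^{a_k}` costs the factor
`q_{ki}^{a_k}` and splits off the term `r_{ki} [a_k]_{q_{ki}} x^{a - e_k}`, times the factors
collected so far. -/
def mulVec (i : Fin n) (a : Fin n → ℕ) : (Fin n → ℕ) →₀ K :=
  commFactor q i i a • Finsupp.single (a + Pi.single i 1) 1 +
    ∑ k ∈ Iio i, lowerCoeff q r i k a • Finsupp.single (a - Pi.single k 1) 1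

def mulOp (i : Fin n) : Module.End K ((Fin n → ℕ) →₀ K) :=
  Finsupp.linearCombination K (mulVec q r i)

variable {q r}

lemma commFactor_congr {i k : Fin n} {a b : Fin n → ℕ} (h : ∀ l < k, a l = b l) :
    commFactor q i k a = commFactor q i k b :=
  prod_congr rfl fun l hl => by rw [h l (mem_Iio.1 hl)]

lemma commFactor_add_single_of_le {i k m : Fin n} (a : Fin n → ℕ) (h : k ≤ m) :
    commFactor q i k (a + Pi.single m 1) = commFactor q i k a :=
  commFactor_congr fun l hl => by simp [(hl.trans_le h).ne]

lemma commFactor_sub_single_of_le {i k m : Fin n} (a : Fin n → ℕ) (h : k ≤ m) :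
    commFactor q i k (a - Pi.single m 1) = commFactor q i k a :=
  commFactor_congr fun l hl => by simp [(hl.trans_le h).ne]

lemma commFactor_add_single_of_lt {i k m : Fin n} (a : Fin n → ℕ) (h : m < k) :
    commFactor q i k (a + Pi.single m 1) = q m i * commFactor q i k a := by
  unfold commFactor
  rw [← mul_prod_erase _ _ (mem_Iio.2 h), ← mul_prod_erase _ (fun l => q l i ^ a l) (mem_Iio.2 h),
    prod_congr rfl fun l hl => by rw [Pi.add_apply, Pi.single_eq_of_ne (ne_of_mem_erase hl),
      add_zero]]
  simp only [Pi.add_apply, Pi.single_eq_same, pow_succ']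
  ring

lemma commFactor_sub_single_of_lt {i k m : Fin n} {a : Fin n → ℕ} (h : m < k) (hm : a m ≠ 0) :
    q m i * commFactor q i k (a - Pi.single m 1) = commFactor q i k a := by
  rw [← commFactor_add_single_of_lt _ h, tsub_add_cancel_of_le (single_le_of_ne_zero hm)]

lemma lowerCoeff_of_eq_zero {i k : Fin n} {a : Fin n → ℕ} (h : a k = 0) :
    lowerCoeff q r i k a = 0 := by
  simp [lowerCoeff, h]

lemma lowerCoeff_add_single_of_lt {i k m : Fin n} (a : Fin n → ℕ) (h : k < m) :
    lowerCoeff q r i k (a + Pi.single m 1) = lowerCoeff q r i k a := by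
  simp [lowerCoeff, h.ne, commFactor_add_single_of_le a h.le]

lemma lowerCoeff_sub_single_of_lt {i k m : Fin n} (a : Fin n → ℕ) (h : k < m) :
    lowerCoeff q r i k (a - Pi.single m 1) = lowerCoeff q r i k a := by
  simp [lowerCoeff, h.ne, commFactor_sub_single_of_le a h.le]

lemma lowerCoeff_add_single_of_gt {i k m : Fin n} (a : Fin n → ℕ) (h : m < k) :
    lowerCoeff q r i k (a + Pi.single m 1) = q m i * lowerCoeff q r i k a := by
  simp only [lowerCoeff, Pi.add_apply, Pi.single_eq_of_ne h.ne', add_zero,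
    commFactor_add_single_of_lt a h]
  ring

lemma lowerCoeff_sub_single_of_gt {i k m : Fin n} {a : Fin n → ℕ} (h : m < k) (hm : a m ≠ 0) :
    q m i * lowerCoeff q r i k (a - Pi.single m 1) = lowerCoeff q r i k a := by
  rw [← lowerCoeff_add_single_of_gt _ h, tsub_add_cancel_of_le (single_le_of_ne_zero hm)]

end Representation

section Coefficients

variable {K : Type} [Field K] {n : ℕ} {q r : Fin n → Fin n → K}
  {i j : Fin n} (hij : i < j)
include hij

lemma coeff_raise_raise (a : Fin n → ℕ) :
    commFactor q i i a * commFactor q j j (a + Pi.single i 1) =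
      q i j * (commFactor q j j a * commFactor q i i (a + Pi.single j 1)) := by
  rw [commFactor_add_single_of_lt a hij, commFactor_add_single_of_le a hij.le]
  ring

variable (hc : Condition q r) (hq0 : ∀ i j : Fin n, i ≠ j → q i j ≠ 0)
include hc hq0

lemma coeff_lower_raise {k : Fin n} (hk : k < i) (a : Fin n → ℕ) :
    lowerCoeff q r i k a * commFactor q j j (a - Pi.single k 1) =
      q i j * (commFactor q j j a * lowerCoeff q r i k (a + Pi.single j 1)) := by
  rw [lowerCoeff_add_single_of_lt a (hk.trans hij)]
  rcases eq_or_ne (a k) 0 with h0 | h0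
  · simp [lowerCoeff_of_eq_zero h0]
  rcases eq_or_ne (r k i) 0 with hr | hr
  · simp [lowerCoeff, hr]
  rw [← commFactor_sub_single_of_lt (hk.trans hij) h0]
  linear_combination (-(lowerCoeff q r i k a * commFactor q j j (a - Pi.single k 1))) *
    hc.mul_eq_one hq0 hk.ne hij.ne (hk.trans hij).ne hr

variable (hqinv : ∀ i j : Fin n, i ≠ j → q j i = (q i j)⁻¹)
include hqinv

lemma commFactor_mul_commFactor (hr : r i j ≠ 0) (a : Fin n → ℕ) :
    commFactor q i i a * commFactor q j i a = 1 := by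
  rw [commFactor, commFactor, ← prod_mul_distrib]
  refine prod_eq_one fun m hm => ?_
  have hmi := mem_Iio.1 hm
  rw [← mul_pow, hc.mul_eq_one' hq0 hqinv hij.ne (hmi.trans hij).ne' hmi.ne' hr, one_pow]

lemma coeff_raise_lower {k : Fin n} (hkj : k < j) (hki : k ≠ i) (a : Fin n → ℕ) :
    commFactor q i i a * lowerCoeff q r j k (a + Pi.single i 1) =
      q i j * (lowerCoeff q r j k a * commFactor q i i (a - Pi.single k 1)) := by
  rcases hki.lt_or_gt with hk | hk
  · rw [lowerCoeff_add_single_of_lt a hk]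
    rcases eq_or_ne (a k) 0 with h0 | h0
    · simp [lowerCoeff_of_eq_zero h0]
    rcases eq_or_ne (r k j) 0 with hr | hr
    · simp [lowerCoeff, hr]
    rw [← commFactor_sub_single_of_lt hk h0,
      hc.eq_of_ne_zero hq0 hqinv hkj.ne hij.ne' hki hr]
    ring
  · rw [lowerCoeff_add_single_of_gt a hk, commFactor_sub_single_of_le a hk.le]
    ring

lemma coeff_raise_lower_self (a : Fin n → ℕ) :
    commFactor q i i a * lowerCoeff q r j i (a + Pi.single i 1) =
      r i j + q i j * (lowerCoeff q r j i a * commFactor q i i (a - Pi.single i 1)) := by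
  rcases eq_or_ne (r i j) 0 with hr | hr
  · simp [lowerCoeff, hr]
  simp only [lowerCoeff, Pi.add_apply, Pi.single_eq_same, geom_sum_succ,
    commFactor_add_single_of_le a le_rfl, commFactor_sub_single_of_le a le_rfl]
  linear_combination r i j * commFactor_mul_commFactor hij hc hq0 hqinv hr a

lemma coeff_lower_lower {k l : Fin n} (hk : k < i) (hl : l < j) (a : Fin n → ℕ) :
    lowerCoeff q r i k a * lowerCoeff q r j l (a - Pi.single k 1) =
      q i j * (lowerCoeff q r j l a * lowerCoeff q r i k (a - Pi.single l 1)) := by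
  rcases lt_trichotomy k l with h | rfl | h
  · rw [lowerCoeff_sub_single_of_lt a h]
    rcases eq_or_ne (a k) 0 with h0 | h0
    · simp [lowerCoeff_of_eq_zero h0]
    rcases eq_or_ne (r k i) 0 with hr | hr
    · simp [lowerCoeff, hr]
    rw [← lowerCoeff_sub_single_of_gt h h0]
    linear_combination (-(lowerCoeff q r i k a * lowerCoeff q r j l (a - Pi.single k 1))) *
      hc.mul_eq_one hq0 hk.ne hij.ne (hk.trans hij).ne hr
  · rcases eq_or_ne (a k) 0 with h0 | h0
    · simp [lowerCoeff_of_eq_zero h0]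
    rcases eq_or_ne (r k i) 0 with hri | hri
    · simp [lowerCoeff, hri]
    rcases eq_or_ne (r k j) 0 with hrj | hrj
    · simp [lowerCoeff, hrj]
    obtain ⟨m, hm⟩ := Nat.exists_eq_add_one_of_ne_zero h0
    have hki : q k i = q i j := hc.eq_of_ne_zero hq0 hqinv hl.ne hij.ne' hk.ne hrj
    have hkj : q k j = (q i j)⁻¹ := (hc k i j hk.ne hij.ne hl.ne hri).1
    simp only [lowerCoeff, commFactor_sub_single_of_le a le_rfl, Pi.sub_apply, Pi.single_eq_same,
      hm, add_tsub_cancel_right, hki, hkj]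
    linear_combination (r k i * r k j * commFactor q i k a * commFactor q j k a) *
      geom_sum_mul_geom_sum_inv (hq0 i j hij.ne) m
  · rw [lowerCoeff_sub_single_of_lt a h]
    rcases eq_or_ne (a l) 0 with h0 | h0
    · simp [lowerCoeff_of_eq_zero h0]
    rcases eq_or_ne (r l j) 0 with hr | hr
    · simp [lowerCoeff, hr]
    rw [← lowerCoeff_sub_single_of_gt h h0,
      hc.eq_of_ne_zero hq0 hqinv hl.ne hij.ne' (h.trans hk).ne hr]
    ring

end Coefficients

section Relations

variable {K : Type} [Field K] {n : ℕ} {q r : Fin n → Fin n → K}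

lemma smul_single_congr {c c' : K} {v v' : Fin n → ℕ} (hc : c = c') (h : c = 0 ∨ v = v') :
    c • Finsupp.single v (1 : K) = c' • Finsupp.single v' 1 := by
  subst hc
  rcases h with h | rfl
  · simp [h]
  · rfl

lemma mulOp_single (i : Fin n) (a : Fin n → ℕ) :
    mulOp q r i (Finsupp.single a 1) = mulVec q r i a := by
  simp [mulOp]

lemma mulOp_mulVec (i j : Fin n) (a : Fin n → ℕ) :
    mulOp q r j (mulVec q r i a) =
      (commFactor q i i a * commFactor q j j (a + Pi.single i 1)) •
          Finsupp.single (a + Pi.single i 1 + Pi.single j 1) 1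
      + ∑ k ∈ Iio j, (commFactor q i i a * lowerCoeff q r j k (a + Pi.single i 1)) •
          Finsupp.single (a + Pi.single i 1 - Pi.single k 1) 1
      + ∑ k ∈ Iio i, (lowerCoeff q r i k a * commFactor q j j (a - Pi.single k 1)) •
          Finsupp.single (a - Pi.single k 1 + Pi.single j 1) 1
      + ∑ k ∈ Iio i, ∑ l ∈ Iio j, (lowerCoeff q r i k a * lowerCoeff q r j l (a - Pi.single k 1)) •
          Finsupp.single (a - Pi.single k 1 - Pi.single l 1) 1 := by
  rw [mulVec, map_add, map_smul, map_sum]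
  simp only [map_smul, mulOp_single, mulVec, smul_add, smul_sum, smul_smul, sum_add_distrib]
  abel

variable {i j : Fin n} (hij : i < j) (hc : Condition q r)
  (hq0 : ∀ i j : Fin n, i ≠ j → q i j ≠ 0) (hqinv : ∀ i j : Fin n, i ≠ j → q j i = (q i j)⁻¹)
include hij hc hq0 hqinv

/-- The term `k = i` is where `r_{ij}` appears. -/
lemma sum_raise_lower (a : Fin n → ℕ) :
    ∑ k ∈ Iio j, (commFactor q i i a * lowerCoeff q r j k (a + Pi.single i 1)) •
        Finsupp.single (a + Pi.single i 1 - Pi.single k 1) (1 : K) =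
      q i j • ∑ k ∈ Iio j, (lowerCoeff q r j k a * commFactor q i i (a - Pi.single k 1)) •
        Finsupp.single (a - Pi.single k 1 + Pi.single i 1) 1
      + r i j • Finsupp.single a 1 := by
  have hi : i ∈ Iio j := mem_Iio.2 hij
  rw [smul_sum, ← add_sum_erase _ _ hi, ← add_sum_erase _ _ hi, add_right_comm]
  congr 1
  · rw [add_tsub_cancel_right, coeff_raise_lower_self hij hc hq0 hqinv, add_smul, add_comm,
      smul_smul]
    congr 1
    refine smul_single_congr rfl ?_
    rcases eq_or_ne (a i) 0 with h0 | h0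
    · simp [lowerCoeff_of_eq_zero h0]
    · exact Or.inr (tsub_add_cancel_of_le (single_le_of_ne_zero h0)).symm
  · refine sum_congr rfl fun k hk => ?_
    rw [smul_smul]
    refine smul_single_congr (coeff_raise_lower hij hc hq0 hqinv
      (mem_Iio.1 (mem_of_mem_erase hk)) (ne_of_mem_erase hk) a) (Or.inr ?_)
    rw [sub_single_add_single_comm a (ne_of_mem_erase hk)]

lemma mulOp_mulVec_of_lt (a : Fin n → ℕ) :
    mulOp q r j (mulVec q r i a) =
      q i j • mulOp q r i (mulVec q r j a) + r i j • Finsupp.single a 1 := by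
  rw [mulOp_mulVec, mulOp_mulVec, sum_raise_lower hij hc hq0 hqinv a]
  have raise_raise : (commFactor q i i a * commFactor q j j (a + Pi.single i 1)) •
      Finsupp.single (a + Pi.single i 1 + Pi.single j 1) (1 : K) =
      q i j • ((commFactor q j j a * commFactor q i i (a + Pi.single j 1)) •
        Finsupp.single (a + Pi.single j 1 + Pi.single i 1) 1) := by
    rw [smul_smul]
    exact smul_single_congr (coeff_raise_raise hij a) (Or.inr (add_right_comm _ _ _))
  have lower_raise : ∑ k ∈ Iio i, (lowerCoeff q r i k a * commFactor q j j (a - Pi.single k 1)) •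
      Finsupp.single (a - Pi.single k 1 + Pi.single j 1) (1 : K) =
      q i j • ∑ k ∈ Iio i, (commFactor q j j a * lowerCoeff q r i k (a + Pi.single j 1)) •
        Finsupp.single (a + Pi.single j 1 - Pi.single k 1) 1 := by
    rw [smul_sum]
    refine sum_congr rfl fun k hk => ?_
    rw [smul_smul]
    exact smul_single_congr (coeff_lower_raise hij hc hq0 (mem_Iio.1 hk) a)
      (Or.inr (sub_single_add_single_comm a ((mem_Iio.1 hk).trans hij).ne))
  have lower_lower : ∑ k ∈ Iio i, ∑ l ∈ Iio j,
      (lowerCoeff q r i k a * lowerCoeff q r j l (a - Pi.single k 1)) •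
        Finsupp.single (a - Pi.single k 1 - Pi.single l 1) (1 : K) =
      q i j • ∑ k ∈ Iio j, ∑ l ∈ Iio i,
        (lowerCoeff q r j k a * lowerCoeff q r i l (a - Pi.single k 1)) •
          Finsupp.single (a - Pi.single k 1 - Pi.single l 1) 1 := by
    rw [smul_sum, sum_comm]
    refine sum_congr rfl fun l hl => ?_
    rw [smul_sum]
    refine sum_congr rfl fun k hk => ?_
    rw [smul_smul]
    exact smul_single_congr (coeff_lower_lower hij hc hq0 hqinv (mem_Iio.1 hk) (mem_Iio.1 hl) a)
      (Or.inr tsub_right_comm)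
  rw [raise_raise, lower_raise, lower_lower]
  simp only [smul_add, smul_sum]
  abel

theorem mulOp_mul_mulOp :
    mulOp q r j * mulOp q r i = q i j • (mulOp q r i * mulOp q r j) + algebraMap K _ (r i j) := by
  refine Finsupp.lhom_ext' fun a => LinearMap.ext_ring ?_
  simp [mulOp_single, mulOp_mulVec_of_lt hij hc hq0 hqinv a]

end Relations

section Basis

variable {K : Type} [Field K] {n : ℕ} {q r : Fin n → Fin n → K}

lemma mulOp_single_of_forall_lt {j : Fin n} {b : Fin n → ℕ} (hb : ∀ l < j, b l = 0) :
    mulOp q r j (Finsupp.single b 1) = Finsupp.single (b + Pi.single j 1) 1 := by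
  have hC : commFactor q j j b = 1 :=
    prod_eq_one fun l hl => by rw [hb l (mem_Iio.1 hl), pow_zero]
  rw [mulOp_single, mulVec, hC, one_smul,
    sum_eq_zero fun k hk => by rw [lowerCoeff_of_eq_zero (hb k (mem_Iio.1 hk)), zero_smul],
    add_zero]

theorem linearIndependent_stdMonomial_gen (hc : Condition q r)
    (hq0 : ∀ i j : Fin n, i ≠ j → q i j ≠ 0) (hqinv : ∀ i j : Fin n, i ≠ j → q j i = (q i j)⁻¹) :
    LinearIndependent K (stdMonomial n (gen q r)) := by
  let ρ := liftOfRel (mulOp q r) fun i j hij => mulOp_mul_mulOp hij hc hq0 hqinv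
  have hρ (a : Fin n → ℕ) :
      ρ (stdMonomial n (gen q r) a) (Finsupp.single 0 1) = Finsupp.single a 1 := by
    induction a using induction_add_single with
    | zero => simp [ρ, stdMonomial_zero]
    | add_single j b hb ih =>
      rw [stdMonomial_add_single _ hb, map_mul, Module.End.mul_apply, ih, liftOfRel_gen,
        mulOp_single_of_forall_lt hb]
  refine LinearIndependent.of_comp
    ((LinearMap.applyₗ (Finsupp.single 0 1)).comp ρ.toLinearMap) ?_
  convert (Finsupp.basisSingleOne (R := K) (ι := Fin n → ℕ)).linearIndependent
  ext1 a
  simp [hρ]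

theorem isMonBasis_gen_iff (hq0 : ∀ i j : Fin n, i ≠ j → q i j ≠ 0)
    (hqinv : ∀ i j : Fin n, i ≠ j → q j i = (q i j)⁻¹)
    (hrinv : ∀ i j : Fin n, i ≠ j → r j i = -(q i j)⁻¹ * r i j) :
    IsMonBasis K n (gen q r) ↔ Condition q r :=
  ⟨fun h => condition_of_linearIndependent (fun _ _ => gen_mul_gen) h.1 hq0 hqinv hrinv,
    fun hc => ⟨linearIndependent_stdMonomial_gen hc hq0 hqinv,
      span_stdMonomial_eq_top (fun _ _ => gen_mul_gen) adjoin_range_gen⟩⟩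

end Basis

section Permutation

variable {K : Type} [Field K] {n : ℕ} {q r : Fin n → Fin n → K}
  (hq0 : ∀ i j : Fin n, i ≠ j → q i j ≠ 0) (hqinv : ∀ i j : Fin n, i ≠ j → q j i = (q i j)⁻¹)
  (hrinv : ∀ i j : Fin n, i ≠ j → r j i = -(q i j)⁻¹ * r i j)
include hq0 hqinv hrinv

def permEquiv (σ : Equiv.Perm (Fin n)) :
    RingQuot (PresRel K n (fun i j => q (σ i) (σ j)) (fun i j => r (σ i) (σ j))) ≃ₐ[K]
      RingQuot (PresRel K n q r) :=
  AlgEquiv.ofAlgHom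
    (liftOfRel (fun i => gen q r (σ i)) fun _ _ hij =>
      gen_mul_gen_of_ne hq0 hqinv hrinv (σ.injective.ne hij.ne))
    (liftOfRel (fun i => gen _ _ (σ.symm i)) fun i j hij => by
      simpa using gen_mul_gen_of_ne (fun _ _ h => hq0 _ _ (σ.injective.ne h))
        (fun _ _ h => hqinv _ _ (σ.injective.ne h)) (fun _ _ h => hrinv _ _ (σ.injective.ne h))
        (σ.symm.injective.ne hij.ne))
    (algHom_ext_gen fun i => by simp)
    (algHom_ext_gen fun i => by simp)

theorem isMonBasis_gen_perm (hc : Condition q r) (σ : Equiv.Perm (Fin n)) :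
    IsMonBasis K n (fun i => gen q r (σ i)) := by
  have hσ {i j : Fin n} : i ≠ j → σ i ≠ σ j := σ.injective.ne
  have h := (isMonBasis_gen_iff (fun _ _ h => hq0 _ _ (hσ h)) (fun _ _ h => hqinv _ _ (hσ h))
    (fun _ _ h => hrinv _ _ (hσ h))).2 fun _ _ _ hij hjk hik hr =>
      hc _ _ _ (hσ hij) (hσ hjk) (hσ hik) hr
  simpa [permEquiv] using IsMonBasis.map_algEquiv h (permEquiv hq0 hqinv hrinv σ)

end Permutation

end PBW

theorem stmt0_general (K : Type) [Field K] (n : ℕ)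
    (q r : Fin n → Fin n → K)
    (hq0 : ∀ i j : Fin n, i ≠ j → q i j ≠ 0)
    (hqinv : ∀ i j : Fin n, i ≠ j → q j i = (q i j)⁻¹)
    (hrinv : ∀ i j : Fin n, i ≠ j → r j i = -(q i j)⁻¹ * r i j) :
    letI R := RingQuot (PresRel K n q r)
    let x : Fin n → R := fun i => RingQuot.mkAlgHom K (PresRel K n q r) (ι K i)
    (IsMonBasis K n x ↔
        ∀ i j k : Fin n, i ≠ j → j ≠ k → i ≠ k → r i j ≠ 0 →
          q i k = (q j k)⁻¹ ∧ q k j = (q j k)⁻¹) ∧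
      (IsMonBasis K n x ↔
        ∀ σ : Equiv.Perm (Fin n), IsMonBasis K n (fun i => x (σ i))) := by
  intro x
  have hbasis : IsMonBasis K n x ↔ PBW.Condition q r := PBW.isMonBasis_gen_iff hq0 hqinv hrinv
  exact ⟨hbasis, fun h σ => PBW.isMonBasis_gen_perm hq0 hqinv hrinv (hbasis.1 h) σ, fun h => h 1⟩

/-- Lemma 2.9 (equivalence (i) ⟺ (ii) ⟺ (iv)):  for the `K`-algebra `R` generated by
`x_1,…,x_n` subject to the relations `x_j x_i - q_{ij} x_i x_j = r_{ij}` (`1 ≤ i < j ≤ n`),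
the following are equivalent: (1) the standard monomials form a `K`-basis of `R`;
(2) whenever `i, j, k` are distinct and `r_{ij} ≠ 0`, one has `q_{ik} = q_{kj} = q_{jk}⁻¹`;
(3) for every permutation `σ` the permuted standard monomials form a `K`-basis of `R`. -/
theorem stmt0 (K : Type) [Field K] [IsAlgClosed K] (n : ℕ) (hn : 2 ≤ n)
    (q r : Fin n → Fin n → K)
    (hq0 : ∀ i j : Fin n, i ≠ j → q i j ≠ 0)
    (hqinv : ∀ i j : Fin n, i ≠ j → q j i = (q i j)⁻¹)
    (hrinv : ∀ i j : Fin n, i ≠ j → r j i = -(q i j)⁻¹ * r i j) :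
    letI R := RingQuot (PresRel K n q r)
    let x : Fin n → R := fun i => RingQuot.mkAlgHom K (PresRel K n q r) (ι K i)
    (IsMonBasis K n x ↔
        ∀ i j k : Fin n, i ≠ j → j ≠ k → i ≠ k → r i j ≠ 0 →
          q i k = (q j k)⁻¹ ∧ q k j = (q j k)⁻¹) ∧
      (IsMonBasis K n x ↔
        ∀ σ : Equiv.Perm (Fin n), IsMonBasis K n (fun i => x (σ i))) :=
  stmt0_general K n q r hq0 hqinv hrinv
end
end

section
/- In L_n^q, for all 1 ≤ i, j ≤ n the following commutation relations hold: x_i z_j = q^{(-1)^{i-1}} z_j x_i if j is odd and j < i-1; x_i z_j = z_j x_i if j is even and j < i-1; x_i z_{i-1} = z_{i-1} x_i + (q-1) z_{i-2} if i is odd; x_i z_{i-1} = q^{-1} z_{i-1} x_i + (1-q^{-1}) z_{i-2} if i is even; x_i z_j = z_j x_i if j is odd and j ≥ i; x_i z_j = q^{(-1)^{i-1}} z_j x_i if j is even and j ≥ i. -/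
noncomputable section

open FreeAlgebra

/-- Defining relations of the linear connected quantized Weyl algebra `L_n^q`
(generators indexed `0,…,n-1`, corresponding to `x_1,…,x_n`). -/
inductive LRel (K : Type) [Field K] (n : ℕ) (q : K) :
    FreeAlgebra K (Fin n) → FreeAlgebra K (Fin n) → Prop
  | adj (i j : Fin n) (h : j.1 = i.1 + 1) :
      LRel K n q (ι K i * ι K j)
        (q • (ι K j * ι K i) + algebraMap K (FreeAlgebra K (Fin n)) (1 - q))
  | far_odd (i j : Fin n) (h : i.1 + 1 < j.1) (ho : Odd (j.1 - i.1)) :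
      LRel K n q (ι K i * ι K j) (q • (ι K j * ι K i))
  | far_even (i j : Fin n) (h : i.1 + 1 < j.1) (he : Even (j.1 - i.1)) :
      LRel K n q (ι K i * ι K j) (q⁻¹ • (ι K j * ι K i))

/-- The linear connected quantized Weyl algebra `L_n^q`. -/
abbrev LWeyl (K : Type) [Field K] (n : ℕ) (q : K) := RingQuot (LRel K n q)

/-- The generator `x_m` (1-based) of `L_n^q`. -/
def Lgen (K : Type) [Field K] (n : ℕ) (q : K) (m : ℕ) : LWeyl K n q :=
  if h : m - 1 < n then RingQuot.mkAlgHom K (LRel K n q) (ι K ⟨m - 1, h⟩) else 0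

/-- Defining relations of the cyclic connected quantized Weyl algebra `C_n^q`. -/
inductive CRel (K : Type) [Field K] (n : ℕ) (q : K) :
    FreeAlgebra K (Fin n) → FreeAlgebra K (Fin n) → Prop
  | adj (i j : Fin n) (h : j.1 = i.1 + 1) :
      CRel K n q (ι K i * ι K j)
        (q • (ι K j * ι K i) + algebraMap K (FreeAlgebra K (Fin n)) (1 - q))
  | cyc (i j : Fin n) (hi : i.1 = 0) (hj : j.1 = n - 1) :
      CRel K n q (ι K j * ι K i)
        (q • (ι K i * ι K j) + algebraMap K (FreeAlgebra K (Fin n)) (1 - q))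
  | far_odd (i j : Fin n) (h : i.1 + 1 < j.1) (ho : Odd (j.1 - i.1)) :
      CRel K n q (ι K i * ι K j) (q • (ι K j * ι K i))
  | far_even (i j : Fin n) (h : i.1 + 1 < j.1) (hj : j.1 + 1 < n) (he : Even (j.1 - i.1)) :
      CRel K n q (ι K i * ι K j) (q⁻¹ • (ι K j * ι K i))

/-- The cyclic connected quantized Weyl algebra `C_n^q`. -/
abbrev CWeyl (K : Type) [Field K] (n : ℕ) (q : K) := RingQuot (CRel K n q)

/-- The generator `x_m` (1-based) of `C_n^q`. -/
def Cgen (K : Type) [Field K] (n : ℕ) (q : K) (m : ℕ) : CWeyl K n q :=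
  if h : m - 1 < n then RingQuot.mkAlgHom K (CRel K n q) (ι K ⟨m - 1, h⟩) else 0

/-- The shifted sequence of elements `z_{-1} = 0`, `z_0 = 1`, `z_i = z_{i-1} x_i - z_{i-2}`:
here `zsh x k = z_{k-1}`, where `x` is 1-based access to the generators. -/
def zsh {R : Type} [Ring R] (x : ℕ → R) : ℕ → R
  | 0 => 0
  | 1 => 1
  | (k + 2) => zsh x (k + 1) * x (k + 1) - zsh x k

/-- A two-sided ideal is prime. -/
def IsTwoSidedPrime {R : Type} [Ring R] (P : TwoSidedIdeal R) : Prop :=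
  P ≠ ⊤ ∧ ∀ a b : R, (∀ r : R, a * r * b ∈ P) → a ∈ P ∨ b ∈ P

/-- `q` is not a root of unity. -/
def NotRootOfUnity {K : Type} [Field K] (q : K) : Prop :=
  ∀ k : ℕ, 0 < k → q ^ k ≠ 1

/-!
Expanding `z_j = z_{j-1} x_j - z_{j-2}` shows that `x_i z_{j-2} = b z_{j-2} x_i` and
`x_i z_{j-1} = a z_{j-1} x_i` give `x_i z_j = b z_j x_i` as soon as `x_i x_j = c x_j x_i` with
`a c = b`. For `|i - j| ≥ 2` the factor `c` is `σ_i^{±1}`, where `σ_i = q^{(-1)^{i-1}}` is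
`twist q i` and the sign alternates with the parity of `j`; so on each side of `i` the factors
of the `z_j` alternate between two values. The inhomogeneous relations between `x_i` and
`x_{i±1}` only enter at `j = i - 1, i, i + 1`, where a direct computation bridges the two sides.
-/

section Recurrence

variable {K R : Type} [Field K] [Ring R] [Algebra K R] {x : ℕ → R} {y : R}

theorem zsh_add_two (x : ℕ → R) (k : ℕ) : zsh x (k + 2) = zsh x (k + 1) * x (k + 1) - zsh x k :=
  rfl

theorem mul_zsh_add_two {a b c d : K} {k : ℕ}
    (h₀ : y * zsh x k = b • (zsh x k * y)) (h₁ : y * zsh x (k + 1) = a • (zsh x (k + 1) * y))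
    (hx : y * x (k + 1) = c • (x (k + 1) * y) + d • 1) (habc : a * c = b) :
    y * zsh x (k + 2) = b • (zsh x (k + 2) * y) + (a * d) • zsh x (k + 1) := by
  rw [zsh_add_two, mul_sub, ← mul_assoc, h₁, smul_mul_assoc, mul_assoc, hx, h₀, ← habc]
  simp only [mul_add, mul_smul_comm, mul_one, smul_add, smul_smul, sub_mul, smul_sub, mul_assoc]
  abel

theorem mul_zsh_add_two_of_eq {a e : K} {k : ℕ}
    (h₀ : y * zsh x k = (a + e) • (zsh x k * y))
    (h₁ : y * zsh x (k + 1) = a • (zsh x (k + 1) * y) + e • zsh x k) (hx : x (k + 1) = y) :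
    y * zsh x (k + 2) = a • (zsh x (k + 2) * y) := by
  rw [zsh_add_two, mul_sub, ← mul_assoc, h₁, h₀, hx]
  simp only [add_mul, smul_mul_assoc, add_smul, sub_mul, smul_sub, mul_assoc]
  abel

theorem mul_zsh_add_three {a c : K} {k : ℕ}
    (h₁ : y * zsh x (k + 1) = a • (zsh x (k + 1) * y) + (a * (c - 1)) • zsh x k)
    (h₂ : y * zsh x (k + 2) = a • (zsh x (k + 2) * y)) (hx₁ : x (k + 1) = y)
    (hx₂ : y * x (k + 2) = c • (x (k + 2) * y) + (1 - c) • 1) :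
    y * zsh x (k + 3) = (a * c) • (zsh x (k + 3) * y) := by
  have hz : zsh x (k + 2) = zsh x (k + 1) * y - zsh x k := by rw [zsh_add_two, hx₁]
  rw [zsh_add_two x (k + 1), mul_sub, ← mul_assoc, h₂, h₁, smul_mul_assoc, mul_assoc, hx₂, hz]
  simp only [mul_add, mul_sub, sub_mul, mul_smul_comm, mul_one, smul_add, smul_sub,
    mul_assoc]
  module

theorem mul_zsh_add_two_of_smul {a b c : K} {k : ℕ}
    (h₀ : y * zsh x k = b • (zsh x k * y)) (h₁ : y * zsh x (k + 1) = a • (zsh x (k + 1) * y))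
    (hx : y * x (k + 1) = c • (x (k + 1) * y)) (habc : a * c = b) :
    y * zsh x (k + 2) = b • (zsh x (k + 2) * y) := by
  simpa using mul_zsh_add_two (d := 0) h₀ h₁ (by simpa using hx) habc

theorem mul_zsh_of_alternating {α β γ δ : K} {k₀ N : ℕ} (hγ : β * γ = α) (hδ : α * δ = β)
    (hx : ∀ m, k₀ < m → m < N → y * x m = (if Even m then δ else γ) • (x m * y))
    (h₀ : y * zsh x k₀ = (if Even k₀ then α else β) • (zsh x k₀ * y))
    (h₁ : k₀ + 1 ≤ N →
      y * zsh x (k₀ + 1) = (if Even (k₀ + 1) then α else β) • (zsh x (k₀ + 1) * y)) :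
    ∀ k, k₀ ≤ k → k ≤ N → y * zsh x k = (if Even k then α else β) • (zsh x k * y) := by
  intro k
  induction k using Nat.strong_induction_on with
  | _ k ih =>
    intro hk₀ hkN
    obtain rfl | rfl | ⟨l, rfl, hl⟩ : k = k₀ ∨ k = k₀ + 1 ∨ ∃ l, k = l + 2 ∧ k₀ ≤ l := by
      rcases Nat.lt_or_ge k (k₀ + 2) with h | h
      · omega
      · exact Or.inr (Or.inr ⟨k - 2, by omega, by omega⟩)
    · exact h₀
    · exact h₁ hkN
    · have hpar : Even (l + 2) ↔ Even l := by simp [Nat.even_add]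
      rw [if_congr hpar rfl rfl]
      refine mul_zsh_add_two_of_smul (ih l (by omega) hl (by omega))
        (ih (l + 1) (by omega) (by omega) (by omega)) (hx (l + 1) (by omega) (by omega)) ?_
      by_cases hl : Even l <;> simp [hl, Nat.even_add_one, hγ, hδ]

end Recurrence

section LinearWeyl

open FreeAlgebra

variable {K : Type} [Field K] {n : ℕ} {q : K}

theorem Lgen_eq_mkAlgHom {m : ℕ} (h : m - 1 < n) :
    Lgen K n q m = RingQuot.mkAlgHom K (LRel K n q) (ι K ⟨m - 1, h⟩) :=
  dif_pos h

theorem Lgen_mul_Lgen_succ {i : ℕ} (hi : 1 ≤ i) (hin : i + 1 ≤ n) :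
    Lgen K n q i * Lgen K n q (i + 1)
      = q • (Lgen K n q (i + 1) * Lgen K n q i) + (1 - q) • 1 := by
  rw [Lgen_eq_mkAlgHom (by omega), Lgen_eq_mkAlgHom (by omega), ← map_mul, ← map_mul,
    RingQuot.mkAlgHom_rel K (LRel.adj _ _ (by simp; omega)), map_add, map_smul, map_mul,
    AlgHom.commutes, Algebra.algebraMap_eq_smul_one]

theorem Lgen_succ_mul_Lgen (hq : q ≠ 0) {i : ℕ} (hi : 1 ≤ i) (hin : i + 1 ≤ n) :
    Lgen K n q (i + 1) * Lgen K n q i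
      = q⁻¹ • (Lgen K n q i * Lgen K n q (i + 1)) + (1 - q⁻¹) • 1 := by
  rw [Lgen_mul_Lgen_succ hi hin, smul_add, smul_smul, inv_mul_cancel₀ hq, one_smul, smul_smul,
    mul_one_sub, inv_mul_cancel₀ hq]
  module

theorem Lgen_mul_Lgen_of_add_one_lt {i m : ℕ} (hi : 1 ≤ i) (him : i + 1 < m) (hm : m ≤ n) :
    Lgen K n q i * Lgen K n q m
      = (if Even (m - i) then q⁻¹ else q) • (Lgen K n q m * Lgen K n q i) := by
  have hsub : (⟨m - 1, by omega⟩ : Fin n).1 - (⟨i - 1, by omega⟩ : Fin n).1 = m - i := by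
    simp only; omega
  rw [Lgen_eq_mkAlgHom (by omega), Lgen_eq_mkAlgHom (by omega), ← map_mul, ← map_mul]
  split_ifs with h
  · rw [RingQuot.mkAlgHom_rel K (LRel.far_even _ _ (by simp only; omega) (hsub ▸ h)), map_smul]
  · rw [RingQuot.mkAlgHom_rel K (LRel.far_odd _ _ (by simp only; omega)
      (hsub ▸ Nat.not_even_iff_odd.mp h)), map_smul]

def twist (q : K) (i : ℕ) : K := if Even i then q⁻¹ else q

theorem twist_ne_zero (hq : q ≠ 0) (i : ℕ) : twist q i ≠ 0 := by
  unfold twist; split_ifs <;> simp [hq]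

theorem twist_eq_zpow {i : ℕ} (hi : 1 ≤ i) : twist q i = q ^ ((-1 : ℤ) ^ (i - 1)) := by
  rcases Nat.even_or_odd i with h | h
  · have : Odd (i - 1) := Nat.Even.sub_odd hi h odd_one
    simp [twist, h, this.neg_one_pow]
  · have : Even (i - 1) := Nat.Odd.sub_odd h odd_one
    simp [twist, Nat.not_even_iff_odd.mpr h, this.neg_one_pow]

theorem Lgen_mul_Lgen_eq_twist_of_lt {i m : ℕ} (hi : 1 ≤ i) (him : i + 1 < m) (hm : m ≤ n) :
    Lgen K n q i * Lgen K n q m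
      = (if Even m then twist q i else (twist q i)⁻¹) • (Lgen K n q m * Lgen K n q i) := by
  rw [Lgen_mul_Lgen_of_add_one_lt hi him hm]
  have him' : i ≤ m := by omega
  congr 1
  by_cases h : Even i <;> by_cases h' : Even m <;> simp [twist, Nat.even_sub him', h, h']

theorem Lgen_mul_Lgen_eq_twist_of_gt (hq : q ≠ 0) {i m : ℕ} (hm : 1 ≤ m) (hmi : m + 1 < i)
    (hi : i ≤ n) :
    Lgen K n q i * Lgen K n q m
      = (if Even m then (twist q i)⁻¹ else twist q i) • (Lgen K n q m * Lgen K n q i) := by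
  have hmi' : m ≤ i := by omega
  have hc : (if Even m then (twist q i)⁻¹ else twist q i) * (if Even (i - m) then q⁻¹ else q)
      = 1 := by
    by_cases h : Even i <;> by_cases h' : Even m <;> simp [twist, Nat.even_sub hmi', h, h', hq]
  rw [Lgen_mul_Lgen_of_add_one_lt hm hmi hi, smul_smul, hc, one_smul]

theorem Lgen_mul_zsh_of_le (hq : q ≠ 0) {i : ℕ} (hi : i ≤ n) :
    ∀ k ≤ i - 1, Lgen K n q i * zsh (Lgen K n q) k
      = (if Even k then twist q i else 1) • (zsh (Lgen K n q) k * Lgen K n q i) := by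
  intro k hk
  refine mul_zsh_of_alternating (one_mul _) (mul_inv_cancel₀ (twist_ne_zero hq i))
    (fun m hm hmi => Lgen_mul_Lgen_eq_twist_of_gt hq hm (by omega) hi) (by simp [zsh])
    (fun _ => by simp [zsh]) k (Nat.zero_le k) hk

theorem Lgen_mul_zsh_self (hq : q ≠ 0) {i : ℕ} (hi : 1 ≤ i) (hin : i ≤ n) :
    Lgen K n q i * zsh (Lgen K n q) i
      = (if Even i then twist q i else 1) • (zsh (Lgen K n q) i * Lgen K n q i)
        + ((if Even i then twist q i else 1) * (q - 1)) • zsh (Lgen K n q) (i - 1) := by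
  obtain ⟨k, rfl⟩ : ∃ k, i = k + 1 := ⟨i - 1, by omega⟩
  rcases k with _ | k
  · simp [zsh]
  have hA := Lgen_mul_zsh_of_le hq hin
  have hpar : Even (k + 2) ↔ Even k := by simp [Nat.even_add]
  rw [if_congr hpar rfl rfl]
  convert mul_zsh_add_two (hA k (by omega)) (hA (k + 1) (by omega))
    (Lgen_succ_mul_Lgen hq (i := k + 1) (by omega) (by omega)) ?_ using 3
  · by_cases hk : Even k <;>
      simp only [twist, hk, Nat.even_add_one, not_true_eq_false, not_false_eq_true, ↓reduceIte,
        one_mul] <;> field_simp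
  · rfl
  · by_cases hk : Even k <;> simp [twist, hk, Nat.even_add_one, hq]

theorem Lgen_mul_zsh_succ_self (hq : q ≠ 0) {i : ℕ} (hi : 1 ≤ i) (hin : i ≤ n) :
    Lgen K n q i * zsh (Lgen K n q) (i + 1)
      = (if Even i then twist q i else 1) • (zsh (Lgen K n q) (i + 1) * Lgen K n q i) := by
  obtain ⟨k, rfl⟩ : ∃ k, i = k + 1 := ⟨i - 1, by omega⟩
  refine mul_zsh_add_two_of_eq ?_ (Lgen_mul_zsh_self hq hi hin) rfl
  rw [Lgen_mul_zsh_of_le hq hin k (by omega)]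
  congr 1
  by_cases hk : Even k
  · simp [twist, hk, Nat.even_add_one]
  · simp only [twist, hk, Nat.even_add_one, not_false_eq_true, ↓reduceIte]
    field_simp
    ring

theorem Lgen_mul_zsh_add_two_self (hq : q ≠ 0) {i : ℕ} (hi : 1 ≤ i) (hin : i + 1 ≤ n) :
    Lgen K n q i * zsh (Lgen K n q) (i + 2)
      = ((if Even i then twist q i else 1) * q) • (zsh (Lgen K n q) (i + 2) * Lgen K n q i) := by
  obtain ⟨k, rfl⟩ : ∃ k, i = k + 1 := ⟨i - 1, by omega⟩
  exact mul_zsh_add_three (Lgen_mul_zsh_self hq hi (by omega))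
    (Lgen_mul_zsh_succ_self hq hi (by omega)) rfl (Lgen_mul_Lgen_succ hi hin)

theorem Lgen_mul_zsh_of_gt (hq : q ≠ 0) {i : ℕ} (hi : 1 ≤ i) (hin : i ≤ n) :
    ∀ k, i + 1 ≤ k → k ≤ n + 1 → Lgen K n q i * zsh (Lgen K n q) k
      = (if Even k then 1 else twist q i) • (zsh (Lgen K n q) k * Lgen K n q i) := by
  refine mul_zsh_of_alternating (mul_inv_cancel₀ (twist_ne_zero hq i)) (one_mul _)
    (fun m him hmn => Lgen_mul_Lgen_eq_twist_of_lt hi him (by omega)) ?_ fun hin' => ?_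
  · rw [Lgen_mul_zsh_succ_self hq hi hin]
    by_cases h : Even i <;> simp [h, Nat.even_add_one]
  · rw [show i + 1 + 1 = i + 2 by rfl, Lgen_mul_zsh_add_two_self hq hi (by omega)]
    by_cases h : Even i <;> simp [twist, h, Nat.even_add_one, hq]

end LinearWeyl

theorem stmt6_general (K : Type) [Field K] (n : ℕ) (q : K)
    (hq0 : q ≠ 0) :
    let x : ℕ → LWeyl K n q := Lgen K n q
    let z : ℕ → LWeyl K n q := fun j => zsh x (j + 1)
    ∀ i j : ℕ, 1 ≤ i → i ≤ n → 1 ≤ j → j ≤ n →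
      (Odd j → j < i - 1 →
        x i * z j = (q ^ ((-1 : ℤ) ^ (i - 1))) • (z j * x i)) ∧
      (Even j → j < i - 1 → x i * z j = z j * x i) ∧
      (Odd i → j = i - 1 →
        x i * z j = z j * x i + (q - 1) • z (i - 2)) ∧
      (Even i → j = i - 1 →
        x i * z j = q⁻¹ • (z j * x i) + (1 - q⁻¹) • z (i - 2)) ∧
      (Odd j → i ≤ j → x i * z j = z j * x i) ∧
      (Even j → i ≤ j →
        x i * z j = (q ^ ((-1 : ℤ) ^ (i - 1))) • (z j * x i)) := by
  intro x z i j hi hin hj hjn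
  have hA := Lgen_mul_zsh_of_le hq0 hin (j + 1)
  have hB := Lgen_mul_zsh_self hq0 hi hin
  have hC := Lgen_mul_zsh_of_gt hq0 hi hin (j + 1)
  rw [← twist_eq_zpow hi]
  refine ⟨fun hodd hji => ?_, fun hev hji => ?_, fun hodd hji => ?_, fun hev hji => ?_,
    fun hodd hij => ?_, fun hev hij => ?_⟩
  · simpa [Nat.even_add_one, hodd] using hA (by omega)
  · simpa [Nat.even_add_one, hev] using hA (by omega)
  · subst hji
    simp only [x, z, Nat.sub_add_cancel hi, show i - 2 + 1 = i - 1 by omega, hB]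
    simp [Nat.not_even_iff_odd.mpr hodd]
  · subst hji
    simp only [x, z, Nat.sub_add_cancel hi, show i - 2 + 1 = i - 1 by omega, hB]
    simp only [twist, hev, ↓reduceIte]
    field_simp
  · simpa [Nat.even_add_one, hodd] using hC (by omega) (by omega)
  · simpa [Nat.even_add_one, hev] using hC (by omega) (by omega)

/-- Lemma 3.3: the commutation relations between the generators `x_i` and the
elements `z_j` in `L_n^q` (here `z j` denotes `z_j`, realized as `zsh x (j+1)`). -/
theorem stmt6 (K : Type) [Field K] [IsAlgClosed K] (n : ℕ) (hn : 3 ≤ n) (q : K)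
    (hq0 : q ≠ 0) (hq1 : q ≠ 1) :
    let x : ℕ → LWeyl K n q := Lgen K n q
    let z : ℕ → LWeyl K n q := fun j => zsh x (j + 1)
    ∀ i j : ℕ, 1 ≤ i → i ≤ n → 1 ≤ j → j ≤ n →
      (Odd j → j < i - 1 →
        x i * z j = (q ^ ((-1 : ℤ) ^ (i - 1))) • (z j * x i)) ∧
      (Even j → j < i - 1 → x i * z j = z j * x i) ∧
      (Odd i → j = i - 1 →
        x i * z j = z j * x i + (q - 1) • z (i - 2)) ∧
      (Even i → j = i - 1 →
        x i * z j = q⁻¹ • (z j * x i) + (1 - q⁻¹) • z (i - 2)) ∧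
      (Odd j → i ≤ j → x i * z j = z j * x i) ∧
      (Even j → i ≤ j →
        x i * z j = (q ^ ((-1 : ℤ) ^ (i - 1))) • (z j * x i)) :=
  stmt6_general K n q hq0

end
end

section
/- Suppose q is not a root of unity. If n is even, then the quantum torus T_n^q is a simple ring. -/
noncomputable section

open FreeAlgebra

/-- The scalars `q_{ij}` (0-based indices; the corresponding 1-based indices are
`i+1`, `j+1`): `q_{ij} = q` if `j` is even and `i` is odd (1-based), `q_{ij} = 1`
if `j` is odd or both are even, and `q_{ji} = q_{ij}⁻¹`, `q_{ii} = 1`. -/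
def qTor {K : Type} [Field K] (q : K) (n : ℕ) (i j : Fin n) : K :=
  if i.1 < j.1 then (if Even (j.1 + 1) ∧ Odd (i.1 + 1) then q else 1)
  else if j.1 < i.1 then (if Even (i.1 + 1) ∧ Odd (j.1 + 1) then q⁻¹ else 1)
  else 1

/-- The defining relations of the quantum torus `T_n^q`: generators
`z_1,…,z_n` (`Sum.inl`) and their inverses (`Sum.inr`), with
`z_i z_i⁻¹ = z_i⁻¹ z_i = 1` and `z_i z_j = q_{ij} z_j z_i`. -/
inductive TorRel (K : Type) [Field K] (n : ℕ) (q : K) :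
    FreeAlgebra K (Fin n ⊕ Fin n) → FreeAlgebra K (Fin n ⊕ Fin n) → Prop
  | inv_right (i : Fin n) :
      TorRel K n q (ι K (Sum.inl i) * ι K (Sum.inr i)) 1
  | inv_left (i : Fin n) :
      TorRel K n q (ι K (Sum.inr i) * ι K (Sum.inl i)) 1
  | comm (i j : Fin n) :
      TorRel K n q (ι K (Sum.inl i) * ι K (Sum.inl j))
        (qTor q n i j • (ι K (Sum.inl j) * ι K (Sum.inl i)))

/-- The quantum torus `T_n^q`. -/
abbrev QTorus (K : Type) [Field K] (n : ℕ) (q : K) := RingQuot (TorRel K n q)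

/-!
The ordered monomials `z^a = z₁^{a₁} ⋯ zₙ^{aₙ}` (`a ∈ ℤⁿ`) form a basis of `T_n^q`: they
span because a product of two monomials is a scalar multiple of a monomial, and they are
linearly independent because `T_n^q` acts on `K[ℤⁿ]` by weighted shifts, `z^a` sending `δ₀` to
a nonzero multiple of `δ_a`. Every monomial is a unit, and conjugation by `z_k` multiplies `z^a` by
`q^{(E a)_k}`, where `E` is the integer matrix with `q_{ij} = q^{E_{ij}}`. For even `n` the matrix
`E` is injective, so, `q` not being a root of unity, any two distinct monomials are separated by
conjugation with some `z_k`. Hence a nonzero element of minimal support in a two-sided ideal is a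
multiple of a single monomial, i.e. a unit.
-/

theorem zpow_injective_of_pow_ne_one {G₀ : Type*} [GroupWithZero G₀] {x : G₀} (hx0 : x ≠ 0)
    (hx : ∀ k : ℕ, 0 < k → x ^ k ≠ 1) : Function.Injective fun m : ℤ => x ^ m := by
  have hfin : ¬IsOfFinOrder (Units.mk0 x hx0) := fun h => by
    obtain ⟨k, hk, hxk⟩ := h.exists_pow_eq_one
    exact hx k hk (by simpa [Units.ext_iff] using hxk)
  intro m m' h
  exact injective_zpow_iff_not_isOfFinOrder.mpr hfin (Units.ext (by simpa using h))

theorem mul_zpow_eq_of_mul_eq {G : Type*} [Group G] {x y c : G} (hcy : Commute c y)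
    (h : x * y = c * (y * x)) (k : ℤ) : x * y ^ k = c ^ k * (y ^ k * x) := by
  have hconj : x * y * x⁻¹ = c * y := by rw [h, mul_assoc, mul_inv_cancel_right]
  calc x * y ^ k = MulAut.conj x (y ^ k) * x := by simp
    _ = c ^ k * (y ^ k * x) := by
      rw [map_zpow, MulAut.conj_apply, hconj, hcy.mul_zpow, mul_assoc]

theorem Units.mul_zpow_eq_smul {K A : Type*} [Field K] [Ring A] [Algebra K A] {x y : Aˣ} {s : K}
    (hs : s ≠ 0) (h : (x : A) * y = s • (y * x)) (k : ℤ) :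
    (x : A) * ↑(y ^ k) = s ^ k • (↑(y ^ k) * x) := by
  let scalar : Kˣ →* Aˣ := Units.map (algebraMap K A).toMonoidHom
  have hcy : Commute (scalar (Units.mk0 s hs)) y := Units.ext (Algebra.commutes s (y : A))
  have := congrArg Units.val <| mul_zpow_eq_of_mul_eq hcy
    (Units.ext (by simpa [scalar, Algebra.smul_def] using h)) k
  simpa [scalar, ← map_zpow, Units.val_zpow_eq_zpow_val, Algebra.smul_def] using this

section SimplicityCriterion

variable {K A ι : Type*} [Field K] [Ring A] [Algebra K A]

theorem Module.Basis.repr_conj_sub_smul (b : Module.Basis ι K A) {u : Aˣ} {χ : ι → K}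
    (hχ : ∀ l, ↑u * b l * ↑u⁻¹ = χ l • b l) (c : K) (x : A) (l : ι) :
    b.repr (↑u * x * ↑u⁻¹ - c • x) l = (χ l - c) * b.repr x l := by
  let L : A →ₗ[K] A :=
    LinearMap.mulLeft K (u : A) ∘ₗ LinearMap.mulRight K (↑u⁻¹ : A) - c • LinearMap.id
  have hL : b.coord l ∘ₗ L = (χ l - c) • b.coord l := b.ext fun m => by
    by_cases h : m = l <;> simp [L, ← mul_assoc, hχ, h]
  simpa [L, mul_assoc] using LinearMap.congr_fun hL x

variable (b : Module.Basis ι K A) (hunit : ∀ i, IsUnit (b i))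
  (hsep : ∀ i j, i ≠ j →
    ∃ (u : Aˣ) (χ : ι → K), (∀ l, ↑u * b l * ↑u⁻¹ = χ l • b l) ∧ χ i ≠ χ j)
include hunit hsep

-- Induction on the size of the support: conjugating by `u` and subtracting `χ j • x` kills the
-- coefficient at `j` but not the one at `i`.
theorem Module.Basis.one_mem_of_mem_of_ne_zero (I : TwoSidedIdeal A) {x : A} (hxI : x ∈ I)
    (hx : x ≠ 0) : (1 : A) ∈ I := by
  induction hN : (b.repr x).support.card using Nat.strong_induction_on generalizing x with
  | _ N ih =>
    obtain ⟨i, hi⟩ : (b.repr x).support.Nonempty := by simpa using hx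
    by_cases hsingle : (b.repr x).support = {i}
    · have hxi : x = b.repr x i • b i := by
        conv_lhs => rw [← b.linearCombination_repr x]
        rw [Finsupp.linearCombination_apply, Finsupp.sum, hsingle, Finset.sum_singleton]
      obtain ⟨v, hv⟩ := hunit i
      have hinv : (1 : A) = ((b.repr x i)⁻¹ • ↑v⁻¹) * x := by
        nth_rw 2 [hxi]
        rw [smul_mul_smul_comm, inv_mul_cancel₀ (by simpa using hi), one_smul, ← hv,
          Units.inv_mul]
      rw [hinv, smul_mul_assoc, Algebra.smul_def]
      exact I.mul_mem_left _ _ (I.mul_mem_left _ _ hxI)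
    obtain ⟨j, hj, hji⟩ : ∃ j ∈ (b.repr x).support, j ≠ i := by
      by_contra! h
      exact hsingle (Finset.eq_singleton_iff_unique_mem.mpr ⟨hi, h⟩)
    obtain ⟨u, χ, hχ, hij⟩ := hsep i j hji.symm
    set y := ↑u * x * ↑u⁻¹ - χ j • x
    have hy : ∀ l, b.repr y l = (χ l - χ j) * b.repr x l := b.repr_conj_sub_smul hχ _ x
    have hyI : y ∈ I := I.sub_mem (I.mul_mem_right _ _ (I.mul_mem_left _ _ hxI))
      (by rw [Algebra.smul_def]; exact I.mul_mem_left _ _ hxI)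
    have hsub : (b.repr y).support ⊂ (b.repr x).support := by
      refine Finset.ssubset_iff_of_subset (fun l hl => ?_) |>.mpr ⟨j, hj, by simp [hy]⟩
      simp_all
    have hy0 : y ≠ 0 := fun h0 => by
      have hyi := hy i
      rw [h0, map_zero, Finsupp.zero_apply] at hyi
      exact mul_ne_zero (sub_ne_zero.mpr hij) (Finsupp.mem_support_iff.mp hi) hyi.symm
    exact ih _ (hN ▸ Finset.card_lt_card hsub) hyI hy0 rfl

theorem Module.Basis.isSimpleRing_of_isUnit [Nonempty ι] : IsSimpleRing A := by
  have : Nontrivial A := nontrivial_of_ne _ _ (b.ne_zero (Classical.arbitrary ι))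
  refine .of_eq_bot_or_eq_top fun I => or_iff_not_imp_left.mpr fun hI => ?_
  obtain ⟨x, hxI, hx⟩ : ∃ x ∈ I, x ≠ 0 := by
    by_contra! h
    exact hI (eq_bot_iff.mpr fun x hx => (TwoSidedIdeal.mem_bot A).mpr (h x hx))
  exact I.one_mem_iff.mp (b.one_mem_of_mem_of_ne_zero hunit hsep I hxI hx)

end SimplicityCriterion

section WeightedShift

variable {K Γ : Type*} [Field K] [AddCommGroup Γ]

def weightedShift (g : Γ → K) (v : Γ) : Module.End K (Γ →₀ K) :=
  Finsupp.lift _ K _ fun a => Finsupp.single (a + v) (g a)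

@[simp]
theorem weightedShift_single (g : Γ → K) (v a : Γ) (c : K) :
    weightedShift g v (Finsupp.single a c) = Finsupp.single (a + v) (c * g a) := by
  simp [weightedShift, Finsupp.smul_single]

theorem weightedShift_mul (g h : Γ → K) (v w : Γ) :
    weightedShift g v * weightedShift h w = weightedShift (fun a => h a * g (a + w)) (w + v) :=
  Finsupp.lhom_ext fun a c => by simp [-Finsupp.single_mul, add_assoc, mul_assoc]

theorem smul_weightedShift (c : K) (g : Γ → K) (v : Γ) :
    c • weightedShift g v = weightedShift (fun a => c * g a) v :=
  Finsupp.lhom_ext fun a d => by simp [-Finsupp.single_mul, Finsupp.smul_single, mul_left_comm]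

theorem weightedShift_one_zero : weightedShift (fun _ => (1 : K)) (0 : Γ) = 1 :=
  Finsupp.lhom_ext fun a c => by simp

def IsWeightedShift (T : Module.End K (Γ →₀ K)) (v : Γ) : Prop :=
  ∀ a, ∃ t : K, t ≠ 0 ∧ T (Finsupp.single a 1) = Finsupp.single (a + v) t

theorem isWeightedShift_weightedShift {g : Γ → K} (hg : ∀ a, g a ≠ 0) (v : Γ) :
    IsWeightedShift (weightedShift g v) v :=
  fun a => ⟨g a, hg a, by simp⟩

theorem isWeightedShift_one : IsWeightedShift (1 : Module.End K (Γ →₀ K)) 0 :=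
  fun a => ⟨1, one_ne_zero, by simp⟩

theorem IsWeightedShift.mul {S T : Module.End K (Γ →₀ K)} {v w : Γ} (hS : IsWeightedShift S v)
    (hT : IsWeightedShift T w) : IsWeightedShift (S * T) (w + v) := fun a => by
  obtain ⟨t, ht, hTa⟩ := hT a
  obtain ⟨s, hs, hSa⟩ := hS (a + w)
  refine ⟨t * s, mul_ne_zero ht hs, ?_⟩
  rw [Module.End.mul_apply, hTa, ← Finsupp.smul_single_one, map_smul, hSa, Finsupp.smul_single,
    smul_eq_mul, add_assoc]

theorem IsWeightedShift.units_inv {u : (Module.End K (Γ →₀ K))ˣ} {v : Γ}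
    (h : IsWeightedShift (u : Module.End K (Γ →₀ K)) v) :
    IsWeightedShift (↑u⁻¹ : Module.End K (Γ →₀ K)) (-v) := fun a => by
  obtain ⟨t, ht, hu⟩ := h (a + -v)
  refine ⟨t⁻¹, inv_ne_zero ht, ?_⟩
  have hpre : (u : Module.End K (Γ →₀ K)) (Finsupp.single (a + -v) t⁻¹) =
      Finsupp.single a 1 := by
    rw [← Finsupp.smul_single_one, map_smul, hu, Finsupp.smul_single, smul_eq_mul,
      inv_mul_cancel₀ ht, neg_add_cancel_right]
  rw [← hpre, ← Module.End.mul_apply, Units.inv_mul, Module.End.one_apply]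

theorem IsWeightedShift.units_zpow {u : (Module.End K (Γ →₀ K))ˣ} {v : Γ}
    (h : IsWeightedShift (u : Module.End K (Γ →₀ K)) v) (k : ℤ) :
    IsWeightedShift (↑(u ^ k) : Module.End K (Γ →₀ K)) (k • v) := by
  induction k using Int.induction_on with
  | zero => simpa using isWeightedShift_one
  | succ k ih =>
    rw [zpow_add_one, Units.val_mul, add_smul, one_smul, add_comm]
    exact ih.mul h
  | pred k ih =>
    rw [zpow_sub_one, Units.val_mul, sub_smul, one_smul, sub_eq_neg_add]
    exact ih.mul h.units_inv

end WeightedShift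

theorem sum_finRange_smul_single {n : ℕ} (a : Fin n → ℤ) :
    ((List.finRange n).map fun j => a j • Pi.single j (1 : ℤ)).sum = a := by
  simp_rw [← Fin.sum_univ_def, ← Pi.single_smul', smul_eq_mul, mul_one, Finset.univ_sum_single]

-- Defined on all of `ℤ` so that the rows `-1` and `n` below make sense.
def qExp (i j : ℤ) : ℤ :=
  if i < j ∧ Even i ∧ Odd j then 1 else if j < i ∧ Even j ∧ Odd i then -1 else 0

theorem qExp_sub_one_sub_qExp_add_one (i j : ℤ) :
    qExp (j - 1) i - qExp (j + 1) i = if i = j then 1 else 0 := by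
  simp only [qExp, Int.even_iff, Int.odd_iff]
  split_ifs <;> omega

theorem qTor_eq_zpow {K : Type} [Field K] (q : K) {n : ℕ} (i j : Fin n) :
    qTor q n i j = q ^ qExp i j := by
  simp only [qTor, qExp, Nat.even_iff, Nat.odd_iff, Int.even_iff, Int.odd_iff]
  split_ifs <;> first | omega | simp

def qExpMatrix (n : ℕ) : Matrix (Fin n) (Fin n) ℤ :=
  Matrix.of fun i j => qExp i j

theorem qExpMatrix_mulVec_injective {n : ℕ} (he : Even n) :
    Function.Injective (qExpMatrix n).mulVec := by
  refine (injective_iff_map_eq_zero (qExpMatrix n).mulVecLin).mpr fun v hv => ?_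
  -- rows `-1` and `n` vanish, the latter because `n` is even
  have hr : ∀ k : ℤ, -1 ≤ k → k ≤ n → ∑ m : Fin n, qExp k m * v m = 0 := by
    intro k hk1 hkn
    by_cases hk : 0 ≤ k ∧ k < n
    · lift k to ℕ using hk.1
      exact congrFun hv ⟨k, by omega⟩
    · refine Finset.sum_eq_zero fun m _ => ?_
      have := m.2
      obtain ⟨l, hl⟩ := he
      simp only [qExp, Int.even_iff, Int.odd_iff]
      split_ifs <;> omega
  funext j
  calc v j = ∑ m : Fin n, (qExp (j - 1) m - qExp (j + 1) m) * v m := by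
        simp [qExp_sub_one_sub_qExp_add_one, Fin.val_eq_val]
    _ = 0 := by
        rw [Finset.sum_congr rfl fun m _ => sub_mul _ _ _, Finset.sum_sub_distrib,
          hr _ (by omega) (by omega), hr _ (by omega) (by omega), sub_zero]

namespace QTorus

variable {K : Type} [Field K] {n : ℕ} (q : K)

def gen (i : Fin n) : (QTorus K n q)ˣ where
  val := RingQuot.mkAlgHom K (TorRel K n q) (ι K (.inl i))
  inv := RingQuot.mkAlgHom K (TorRel K n q) (ι K (.inr i))
  val_inv := by rw [← map_mul, RingQuot.mkAlgHom_rel K (TorRel.inv_right i), map_one]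
  inv_val := by rw [← map_mul, RingQuot.mkAlgHom_rel K (TorRel.inv_left i), map_one]

theorem gen_mul_gen (i j : Fin n) :
    (gen q i : QTorus K n q) * gen q j = q ^ qExp i j • ((gen q j : QTorus K n q) * gen q i) := by
  simp only [gen, ← qTor_eq_zpow, ← map_mul, ← map_smul]
  exact RingQuot.mkAlgHom_rel K (TorRel.comm i j)

def orderedMonomial (L : List (Fin n)) (a : Fin n → ℤ) : (QTorus K n q)ˣ :=
  (L.map fun j => gen q j ^ a j).prod

@[simp]
theorem orderedMonomial_nil (a : Fin n → ℤ) : orderedMonomial q [] a = 1 := rfl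

theorem orderedMonomial_cons (j : Fin n) (L : List (Fin n)) (a : Fin n → ℤ) :
    orderedMonomial q (j :: L) a = gen q j ^ a j * orderedMonomial q L a := by
  simp [orderedMonomial]

variable {q}

theorem gen_mul_orderedMonomial (hq0 : q ≠ 0) (k : Fin n) (L : List (Fin n)) (a : Fin n → ℤ) :
    (gen q k : QTorus K n q) * orderedMonomial q L a =
      q ^ (L.map fun j : Fin n => qExp k j * a j).sum •
        ((orderedMonomial q L a : QTorus K n q) * gen q k) := by
  induction L with
  | nil => simp
  | cons j L ih =>
    have hkj := Units.mul_zpow_eq_smul (zpow_ne_zero _ hq0) (gen_mul_gen q k j) (a j)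
    rw [orderedMonomial_cons, Units.val_mul, ← mul_assoc, hkj, smul_mul_assoc, mul_assoc, ih,
      mul_smul_comm, smul_smul, ← zpow_mul, ← zpow_add₀ hq0, ← mul_assoc, List.map_cons,
      List.sum_cons]

theorem orderedMonomial_mul_orderedMonomial (hq0 : q ≠ 0) (L : List (Fin n))
    (a b : Fin n → ℤ) :
    ∃ s : K, (orderedMonomial q L a : QTorus K n q) * orderedMonomial q L b =
      s • (orderedMonomial q L (a + b) : QTorus K n q) := by
  induction L with
  | nil => exact ⟨1, by simp⟩
  | cons j L ih =>
    obtain ⟨s, hs⟩ := ih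
    set r := (L.map fun i : Fin n => qExp j i * a i).sum
    have hswap : (orderedMonomial q L a : QTorus K n q) * gen q j =
        (q ^ r)⁻¹ • ((gen q j : QTorus K n q) * orderedMonomial q L a) := by
      rw [gen_mul_orderedMonomial hq0, smul_smul, inv_mul_cancel₀ (zpow_ne_zero _ hq0),
        one_smul]
    refine ⟨((q ^ r)⁻¹) ^ b j * s, ?_⟩
    simp only [orderedMonomial_cons, Units.val_mul]
    rw [mul_assoc, ← mul_assoc (orderedMonomial q L a : QTorus K n q),
      Units.mul_zpow_eq_smul (inv_ne_zero (zpow_ne_zero _ hq0)) hswap, smul_mul_assoc,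
      mul_smul_comm, mul_assoc, hs, mul_smul_comm, mul_smul_comm, smul_smul, ← mul_assoc,
      ← Units.val_mul, ← zpow_add, Pi.add_apply]

-- `q ^ (twist i ⬝ᵥ a)` is the weight with which `z_i` shifts `δ_a`; counting only `m > i` is
-- what makes `twist_sub_twist` hold, and with it the relations of `T_n^q` for these shifts.
def twist (i : Fin n) : Fin n → ℤ :=
  fun m => if i < m then qExp i m else 0

theorem twist_sub_twist (i j : Fin n) : twist i j - twist j i = qExp i j := by
  simp only [twist, qExp, Fin.lt_def]
  split_ifs <;> omega

variable (q) in
def repGen : Fin n ⊕ Fin n → Module.End K ((Fin n → ℤ) →₀ K)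
  | .inl i => weightedShift (fun a => q ^ (twist i ⬝ᵥ a)) (Pi.single i 1)
  | .inr i =>
    weightedShift (fun a => (q ^ (twist i ⬝ᵥ (a - Pi.single i 1)))⁻¹) (-Pi.single i 1)

def rep (hq0 : q ≠ 0) : QTorus K n q →ₐ[K] Module.End K ((Fin n → ℤ) →₀ K) :=
  RingQuot.liftAlgHom K ⟨FreeAlgebra.lift K (repGen q), fun x y h => by
    cases h with
    | inv_right i | inv_left i =>
      simp only [map_mul, map_one, lift_ι_apply, repGen, weightedShift_mul]
      rw [← weightedShift_one_zero]
      congr 1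
      · funext a
        simp [← sub_eq_add_neg, zpow_ne_zero _ hq0]
      · simp
    | comm i j =>
      simp only [map_mul, map_smul, lift_ι_apply, repGen, weightedShift_mul, smul_weightedShift,
        qTor_eq_zpow, dotProduct_add, dotProduct_single, mul_one, ← zpow_add₀ hq0,
        ← twist_sub_twist i j]
      congr 1
      · funext a
        ring_nf
      · abel⟩

theorem rep_gen (hq0 : q ≠ 0) (i : Fin n) :
    rep hq0 (gen q i : QTorus K n q) =
      weightedShift (fun a => q ^ (twist i ⬝ᵥ a)) (Pi.single i 1) :=
  (RingQuot.liftAlgHom_mkAlgHom_apply K _ _ _).trans (lift_ι_apply _ _)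

theorem isWeightedShift_rep_orderedMonomial (hq0 : q ≠ 0) (L : List (Fin n)) (a : Fin n → ℤ) :
    IsWeightedShift (rep hq0 (orderedMonomial q L a : QTorus K n q))
      (L.map fun j => a j • Pi.single j (1 : ℤ)).sum := by
  induction L with
  | nil => simpa using isWeightedShift_one
  | cons j L ih =>
    have hgen : IsWeightedShift (rep hq0 (gen q j : QTorus K n q)) (Pi.single j 1) :=
      rep_gen hq0 j ▸ isWeightedShift_weightedShift (fun a => zpow_ne_zero _ hq0) _
    have hzpow := IsWeightedShift.units_zpow (u := Units.map (rep hq0).toMonoidHom (gen q j))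
      hgen (a j)
    rw [← map_zpow, Units.coe_map] at hzpow
    rw [orderedMonomial_cons, Units.val_mul, map_mul, List.map_cons, List.sum_cons, add_comm]
    exact hzpow.mul ih

variable (q) in
def monomial (a : Fin n → ℤ) : QTorus K n q :=
  orderedMonomial q (List.finRange n) a

theorem linearIndependent_monomial (hq0 : q ≠ 0) : LinearIndependent K (monomial q (n := n)) := by
  choose t ht hrep using fun a => isWeightedShift_rep_orderedMonomial hq0 (List.finRange n) a 0
  simp only [zero_add, sum_finRange_smul_single] at hrep
  let φ : QTorus K n q →ₗ[K] (Fin n → ℤ) →₀ K :=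
    LinearMap.applyₗ (Finsupp.single 0 1) ∘ₗ (rep hq0).toLinearMap
  have hφ : φ ∘ monomial q =
      (fun a => Units.mk0 (t a) (ht a)) • fun a => Finsupp.single a 1 := by
    funext a
    simp [φ, monomial, hrep]
  exact .of_comp φ (hφ ▸ (Finsupp.linearIndependent_single_one K _).units_smul _)

theorem monomial_zero : monomial q (0 : Fin n → ℤ) = 1 := by
  simp [monomial, orderedMonomial]

theorem monomial_single (i : Fin n) (k : ℤ) : monomial q (Pi.single i k) = ↑(gen q i ^ k) := by
  rw [monomial, orderedMonomial, List.prod_map_eq_pow_single i _ fun j hj _ => by simp [hj],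
    List.count_finRange, pow_one, Pi.single_eq_same]

theorem span_monomial (hq0 : q ≠ 0) :
    ⊤ ≤ Submodule.span K (Set.range (monomial q (n := n))) := by
  let M := Submodule.span K (Set.range (monomial q (n := n)))
  have hmul : M * M ≤ M := by
    rw [Submodule.span_mul_span, Submodule.span_le]
    rintro _ ⟨_, ⟨a, rfl⟩, _, ⟨b, rfl⟩, rfl⟩
    obtain ⟨s, hs⟩ := orderedMonomial_mul_orderedMonomial hq0 (List.finRange n) a b
    show monomial q a * monomial q b ∈ M
    exact hs ▸ M.smul_mem s (Submodule.subset_span ⟨a + b, rfl⟩)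
  let S : Subalgebra K (QTorus K n q) := M.toSubalgebra
    (Submodule.subset_span ⟨0, monomial_zero⟩) fun _ _ hx hy => hmul (Submodule.mul_mem_mul hx hy)
  rintro x -
  obtain ⟨y, rfl⟩ := RingQuot.mkAlgHom_surjective K (TorRel K n q) x
  show _ ∈ S
  induction y using FreeAlgebra.induction with
  | grade0 r => exact (RingQuot.mkAlgHom K (TorRel K n q)).commutes r ▸ S.algebraMap_mem r
  | grade1 x =>
    obtain i | i := x
    · exact Submodule.subset_span ⟨Pi.single i 1, by rw [monomial_single, zpow_one]; rfl⟩
    · exact Submodule.subset_span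
        ⟨Pi.single i (-1), by rw [monomial_single, zpow_neg_one]; rfl⟩
  | mul a b ha hb => rw [map_mul]; exact S.mul_mem ha hb
  | add a b ha hb => rw [map_add]; exact S.add_mem ha hb

open Matrix in
theorem gen_mul_monomial (hq0 : q ≠ 0) (k : Fin n) (a : Fin n → ℤ) :
    (gen q k : QTorus K n q) * monomial q a =
      q ^ (qExpMatrix n *ᵥ a) k • (monomial q a * gen q k) := by
  rw [monomial, gen_mul_orderedMonomial hq0, ← Fin.sum_univ_def]
  rfl

open Matrix in
theorem isSimpleRing (hq0 : q ≠ 0) (hq : ∀ k : ℕ, 0 < k → q ^ k ≠ 1) (he : Even n) :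
    IsSimpleRing (QTorus K n q) := by
  let b := Module.Basis.mk (linearIndependent_monomial (n := n) hq0) (span_monomial hq0)
  have hb : ⇑b = monomial q := Module.Basis.coe_mk _ _
  refine b.isSimpleRing_of_isUnit (fun a => hb ▸ (orderedMonomial q _ a).isUnit) fun a a' ha => ?_
  obtain ⟨k, hk⟩ := Function.ne_iff.mp ((qExpMatrix_mulVec_injective he).ne ha)
  refine ⟨gen q k, fun l => q ^ (qExpMatrix n *ᵥ l) k, fun l => ?_,
    (zpow_injective_of_pow_ne_one hq0 hq).ne hk⟩
  rw [hb, gen_mul_monomial hq0, smul_mul_assoc, Units.mul_inv_cancel_right]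

end QTorus

theorem stmt8_general (K : Type) [Field K] (n : ℕ) (q : K)
    (hq0 : q ≠ 0) (hq : ∀ k : ℕ, 0 < k → q ^ k ≠ 1) (he : Even n) :
    IsSimpleRing (QTorus K n q) :=
  QTorus.isSimpleRing hq0 hq he

/-- Lemma 3.7 (even case): if `q` is not a root of unity and `n` is even, then the
quantum torus `T_n^q` is a simple ring. -/
theorem stmt8 (K : Type) [Field K] [IsAlgClosed K] (n : ℕ) (hn : 2 ≤ n) (q : K)
    (hq0 : q ≠ 0) (hq : ∀ k : ℕ, 0 < k → q ^ k ≠ 1) (he : Even n) :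
    IsSimpleRing (QTorus K n q) :=
  stmt8_general K n q hq0 hq he

end
end

section
/- Suppose q is not a root of unity and let z = f z_1^{a_1} z_2^{a_2} ... z_{n-1}^{a_{n-1}} where f ∈ K^* and a_1,...,a_{n-1} are non-negative integers. Then the two-sided ideal of L = L_n^q generated by z is all of L, and consequently no prime ideal of L contains any such element z. -/
noncomputable section

open FreeAlgebra

namespace S9
open RingQuot

variable {K : Type} [Field K] {n : ℕ} {q : K}

/-- `Zz k = z_k`. -/
def Zz (K : Type) [Field K] (n : ℕ) (q : K) (k : ℕ) : LWeyl K n q :=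
  zsh (Lgen K n q) (k + 1)

lemma Zz_zero : Zz K n q 0 = 1 := rfl

lemma Zz_one : Zz K n q 1 = Lgen K n q 1 := by
  show (1 : LWeyl K n q) * Lgen K n q 1 - 0 = Lgen K n q 1
  rw [one_mul, sub_zero]

lemma Zz_succ (k : ℕ) :
    Zz K n q (k + 2) = Zz K n q (k + 1) * Lgen K n q (k + 2) - Zz K n q k := rfl

lemma Lgen_eq (m : ℕ) (h1 : 1 ≤ m) (h2 : m ≤ n) :
    Lgen K n q m = mkAlgHom K (LRel K n q) (ι K ⟨m - 1, by omega⟩) := by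
  rw [Lgen, dif_pos]

lemma rel_adj (i : ℕ) (h1 : 1 ≤ i) (h2 : i + 1 ≤ n) :
    Lgen K n q i * Lgen K n q (i + 1) =
      q • (Lgen K n q (i + 1) * Lgen K n q i) + algebraMap K (LWeyl K n q) (1 - q) := by
  rw [Lgen_eq i h1 (by omega), Lgen_eq (i + 1) (by omega) h2]
  have h := mkAlgHom_rel (S := K)
    (LRel.adj (K := K) (n := n) (q := q) ⟨i - 1, by omega⟩ ⟨i + 1 - 1, by omega⟩ (by simp; omega))
  simpa [map_add, map_smul, AlgHom.commutes] using h

lemma rel_far (i j : ℕ) (h1 : 1 ≤ i) (hij : i + 1 < j) (hj : j ≤ n) :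
    Lgen K n q i * Lgen K n q j =
      (if Even (j - i) then q⁻¹ else q) • (Lgen K n q j * Lgen K n q i) := by
  rw [Lgen_eq i h1 (by omega), Lgen_eq j (by omega) hj]
  rcases Nat.even_or_odd (j - i) with he | ho
  · rw [if_pos he]
    have h := mkAlgHom_rel (S := K)
      (LRel.far_even (K := K) (n := n) (q := q) ⟨i - 1, by omega⟩ ⟨j - 1, by omega⟩
        (by simp; omega) (by simpa [show j - 1 - (i - 1) = j - i by omega] using he))
    simpa [map_smul] using h
  · rw [if_neg (Nat.not_even_iff_odd.mpr ho)]
    have h := mkAlgHom_rel (S := K)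
      (LRel.far_odd (K := K) (n := n) (q := q) ⟨i - 1, by omega⟩ ⟨j - 1, by omega⟩
        (by simp; omega) (by simpa [show j - 1 - (i - 1) = j - i by omega] using ho))
    simpa [map_smul] using h


/-- scalar by which `x_j` moves past `z_k` (for `j ≥ k+2`). -/
def cc (q : K) (k j : ℕ) : K := if Even k then 1 else if Even j then q else q⁻¹

def ee (q : K) (m : ℕ) : K := if Even m then 1 else q

def ee' (q : K) (m : ℕ) : K := if Even m then q⁻¹ else 1

lemma cc_ne_zero (hq0 : q ≠ 0) (k j : ℕ) : cc q k j ≠ 0 := by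
  unfold cc; split_ifs <;> simp [hq0]

lemma ee_ne_zero (hq0 : q ≠ 0) (m : ℕ) : ee q m ≠ 0 := by
  unfold ee; split_ifs <;> simp [hq0]

lemma ee'_ne_zero (hq0 : q ≠ 0) (m : ℕ) : ee' q m ≠ 0 := by
  unfold ee'; split_ifs <;> simp [hq0]

lemma ee_eq_q_mul_ee' (hq0 : q ≠ 0) (m : ℕ) : ee q m = q * ee' q m := by
  unfold ee ee'; split_ifs <;> field_simp

lemma cc_parity_step (k j : ℕ) : cc q (k + 2) j = cc q k j := by
  unfold cc
  have h : Even (k + 2) ↔ Even k := by simp [Nat.even_add]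
  by_cases hk : Even k
  · rw [if_pos (h.mpr hk), if_pos hk]
  · rw [if_neg (fun hh => hk (h.mp hh)), if_neg hk]

lemma cc_step (hq0 : q ≠ 0) (k j : ℕ) (h : k + 2 ≤ j) :
    (if Even (j - (k + 2)) then q⁻¹ else q) * cc q (k + 1) j = cc q k j := by
  have hsub : Even (j - (k + 2)) ↔ (Even j ↔ Even (k + 2)) := Nat.even_sub h
  unfold cc
  simp only [hsub, Nat.even_add, Nat.even_add_one, Nat.even_iff]
  rcases Nat.mod_two_eq_zero_or_one k with hk | hk <;>
    rcases Nat.mod_two_eq_zero_or_one j with hj | hj <;>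
      simp [hk, hj] <;> field_simp

lemma lemA (hq0 : q ≠ 0) :
    ∀ k j : ℕ, k + 2 ≤ j → j ≤ n →
      Zz K n q k * Lgen K n q j = cc q k j • (Lgen K n q j * Zz K n q k)
  | 0, j, h1, h2 => by simp [Zz_zero, cc]
  | 1, j, h1, h2 => by
      rw [Zz_one, rel_far 1 j (le_refl 1) (by omega) h2]
      congr 1
      have hsub : Even (j - 1) ↔ (Even j ↔ Even 1) := Nat.even_sub (by omega)
      unfold cc
      simp only [hsub, Nat.even_iff]
      rcases Nat.mod_two_eq_zero_or_one j with hj | hj <;> simp [hj]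
  | (k + 2), j, h1, h2 => by
      have hA1 := lemA hq0 (k + 1) j (by omega) h2
      have hA0 := lemA hq0 k j (by omega) h2
      have hfar := rel_far (K := K) (n := n) (q := q) (k + 2) j (by omega) (by omega) h2
      rw [Zz_succ, sub_mul, mul_assoc, hfar, mul_smul_comm, ← mul_assoc, hA1, hA0,
        cc_parity_step]
      simp only [smul_mul_assoc, smul_smul, mul_assoc]
      rw [cc_step hq0 k j (by omega), mul_sub, smul_sub]


lemma cc_B1 (hq0 : q ≠ 0) (k : ℕ) : q * cc q (k + 1) (k + 3) = ee q (k + 2) := by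
  unfold cc ee
  simp only [Nat.even_iff, Nat.add_mod_right]
  rcases Nat.mod_two_eq_zero_or_one k with hk | hk <;>
    simp [Nat.add_mod, hk] <;> field_simp

lemma cc_B0 (k : ℕ) : cc q k (k + 3) = ee q (k + 2) := by
  unfold cc ee
  simp only [Nat.even_iff, Nat.add_mod_right]
  rcases Nat.mod_two_eq_zero_or_one k with hk | hk <;> simp [Nat.add_mod, hk]

lemma lemB (hq0 : q ≠ 0) (m : ℕ) (h1 : 1 ≤ m) (h2 : m + 1 ≤ n) :
    Zz K n q m * Lgen K n q (m + 1) =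
      ee q m • (Lgen K n q (m + 1) * Zz K n q m) + (1 - q) • Zz K n q (m - 1) := by
  match m, h1 with
  | 1, _ =>
    rw [Zz_one, show (1:ℕ) - 1 = 0 from rfl, Zz_zero, rel_adj 1 (le_refl 1) h2,
      Algebra.algebraMap_eq_smul_one, show ee q 1 = q by unfold ee; rw [if_neg (by simp)]]
  | (k + 2), _ =>
    have hadj := rel_adj (K := K) (n := n) (q := q) (k + 2) (by omega) h2
    have hA1 := lemA (n := n) hq0 (k + 1) (k + 3) (by omega) (by omega)
    have hA0 := lemA (n := n) hq0 k (k + 3) (by omega) (by omega)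
    rw [show k + 2 + 1 = k + 3 from rfl, show k + 2 - 1 = k + 1 from rfl, Zz_succ, sub_mul,
      mul_assoc, hadj, mul_add, mul_smul_comm, ← mul_assoc, hA1, hA0,
      ← Algebra.commutes, ← Algebra.smul_def]
    simp only [smul_mul_assoc, smul_smul, mul_assoc]
    rw [cc_B1 hq0, cc_B0, mul_sub, smul_sub]
    abel


lemma ee'_succ_inv (hq0 : q ≠ 0) (m : ℕ) : ee' q (m + 1) = (ee q m)⁻¹ := by
  unfold ee ee'
  by_cases h : Even m
  · rw [if_pos h, if_neg (by simp [Nat.even_add_one, h]), inv_one]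
  · rw [if_neg h, if_pos (by simp [Nat.even_add_one, h])]

lemma lemC (hq0 : q ≠ 0) :
    ∀ m : ℕ, 1 ≤ m → m ≤ n →
      Zz K n q m * Zz K n q (m - 1) = ee' q m • (Zz K n q (m - 1) * Zz K n q m)
  | 1, _, _ => by
      rw [show (1:ℕ) - 1 = 0 from rfl, Zz_zero, one_mul, mul_one,
        show ee' q 1 = 1 by unfold ee'; rw [if_neg (by simp)], one_smul]
  | (k + 2), _, h2 => by
      have hB := lemB (n := n) hq0 (k + 1) (by omega) (by omega)
      rw [show k + 1 + 1 = k + 2 from rfl, show k + 1 - 1 = k from rfl] at hB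
      have hC := lemC hq0 (k + 1) (by omega) (by omega)
      rw [show k + 1 - 1 = k from rfl] at hC
      have eB : ee q (k + 1) • (Lgen K n q (k + 2) * Zz K n q (k + 1)) =
          Zz K n q (k + 1) * Lgen K n q (k + 2) - (1 - q) • Zz K n q k :=
        eq_sub_of_add_eq hB.symm
      have hsplit : Zz K n q (k + 1) * Lgen K n q (k + 2) =
          Zz K n q (k + 2) + Zz K n q k := by
        rw [Zz_succ]; abel
      have key : ee q (k + 1) • (Zz K n q (k + 2) * Zz K n q (k + 1)) =
          Zz K n q (k + 1) * Zz K n q (k + 2) := by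
        conv_lhs => rw [Zz_succ]
        rw [sub_mul, smul_sub, mul_assoc, ← mul_smul_comm, eB, mul_sub, mul_smul_comm,
          hsplit, mul_add, hC, ee_eq_q_mul_ee' hq0]
        module
      have he : ee q (k + 1) ≠ 0 := ee_ne_zero hq0 _
      rw [show k + 2 - 1 = k + 1 from rfl, show ee' q (k + 2) = (ee q (k + 1))⁻¹ from
        ee'_succ_inv hq0 (k + 1), ← key, inv_smul_smul₀ he]


lemma lemApow (hq0 : q ≠ 0) (k j : ℕ) (h1 : k + 2 ≤ j) (h2 : j ≤ n) (b : ℕ) :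
    Zz K n q k ^ b * Lgen K n q j = (cc q k j) ^ b • (Lgen K n q j * Zz K n q k ^ b) := by
  induction b with
  | zero => simp
  | succ b ih =>
      rw [pow_succ, mul_assoc, lemA hq0 k j h1 h2, mul_smul_comm, ← mul_assoc, ih,
        smul_mul_assoc, smul_smul, mul_assoc]
      rw [← pow_succ, ← pow_succ']

lemma lemCpow (hq0 : q ≠ 0) (m : ℕ) (h1 : 1 ≤ m) (h2 : m ≤ n) (i : ℕ) :
    Zz K n q m ^ i * Zz K n q (m - 1) =
      (ee' q m) ^ i • (Zz K n q (m - 1) * Zz K n q m ^ i) := by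
  induction i with
  | zero => simp
  | succ i ih =>
      rw [pow_succ, mul_assoc, lemC hq0 m h1 h2, mul_smul_comm, ← mul_assoc, ih,
        smul_mul_assoc, smul_smul, mul_assoc]
      rw [← pow_succ, ← pow_succ']

lemma lemBpow (hq0 : q ≠ 0) (m : ℕ) (h1 : 1 ≤ m) (h2 : m + 1 ≤ n) (b : ℕ) :
    Zz K n q m ^ (b + 1) * Lgen K n q (m + 1) =
      (ee q m) ^ (b + 1) • (Lgen K n q (m + 1) * Zz K n q m ^ (b + 1)) +
      ((1 - q) * ee' q m ^ b * (∑ i ∈ Finset.range (b + 1), q ^ i)) •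
        (Zz K n q (m - 1) * Zz K n q m ^ b) := by
  induction b with
  | zero => simpa using lemB hq0 m h1 h2
  | succ b ih =>
      have hgs : (∑ i ∈ Finset.range (b + 1 + 1), q ^ i) =
          q * (∑ i ∈ Finset.range (b + 1), q ^ i) + 1 := geom_sum_succ
      conv_lhs =>
        rw [pow_succ, mul_assoc, lemB hq0 m h1 h2, mul_add, mul_smul_comm, mul_smul_comm,
          ← mul_assoc, ih, lemCpow hq0 m h1 (by omega) (b + 1), add_mul, smul_mul_assoc,
          smul_mul_assoc]
      simp only [mul_assoc, ← pow_succ]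
      rw [ee_eq_q_mul_ee' hq0, hgs]
      module


def Wm (K : Type) [Field K] (n : ℕ) (q : K) (t : ℕ) (b : ℕ → ℕ) : LWeyl K n q :=
  ((List.range t).map (fun k => Zz K n q (k + 1) ^ b (k + 1))).prod

lemma Wm_zero (b : ℕ → ℕ) : Wm K n q 0 b = 1 := rfl

lemma Wm_succ (t : ℕ) (b : ℕ → ℕ) :
    Wm K n q (t + 1) b = Wm K n q t b * Zz K n q (t + 1) ^ b (t + 1) := by
  unfold Wm
  rw [List.range_succ, List.map_append, List.prod_append]
  simp

lemma Wm_congr (t : ℕ) (b b' : ℕ → ℕ) (h : ∀ k, k < t → b (k + 1) = b' (k + 1)) :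
    Wm K n q t b = Wm K n q t b' := by
  induction t with
  | zero => rfl
  | succ t ih => rw [Wm_succ, Wm_succ, ih (fun k hk => h k (by omega)), h t (by omega)]

lemma Wm_comm (hq0 : q ≠ 0) (b : ℕ → ℕ) (j : ℕ) (h2 : j ≤ n) :
    ∀ t, t + 2 ≤ j → ∃ γ : K, γ ≠ 0 ∧
      Wm K n q t b * Lgen K n q j = γ • (Lgen K n q j * Wm K n q t b)
  | 0, h1 => ⟨1, one_ne_zero, by rw [Wm_zero, one_mul, mul_one, one_smul]⟩
  | (t + 1), h1 => by
      obtain ⟨γ, hγ, hcm⟩ := Wm_comm hq0 b j h2 t (by omega)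
      refine ⟨cc q (t + 1) j ^ b (t + 1) * γ,
        mul_ne_zero (pow_ne_zero _ (cc_ne_zero hq0 _ _)) hγ, ?_⟩
      rw [Wm_succ, mul_assoc, lemApow hq0 (t + 1) j (by omega) h2 (b (t + 1)),
        mul_smul_comm, ← mul_assoc, hcm, smul_mul_assoc, smul_smul, mul_assoc]

lemma Wm_absorb (t : ℕ) (b : ℕ → ℕ) :
    Wm K n q t b * Zz K n q t = Wm K n q t (fun k => if k = t then b k + 1 else b k) := by
  cases t with
  | zero => rw [Wm_zero, Zz_zero, one_mul]; rfl
  | succ t =>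
      rw [Wm_succ, Wm_succ, mul_assoc, ← pow_succ]
      congr 1
      · exact Wm_congr _ _ _ (fun k hk => by rw [if_neg (by omega)])
      · rw [if_pos rfl]

lemma kappa_ne_zero (hq0 : q ≠ 0) (hq : NotRootOfUnity q) (m b : ℕ) :
    (1 - q) * ee' q m ^ b * (∑ i ∈ Finset.range (b + 1), q ^ i) ≠ 0 := by
  have h1 : q ≠ 1 := fun h => hq 1 one_pos (by simp [h])
  refine mul_ne_zero (mul_ne_zero (sub_ne_zero.mpr (fun h => h1 h.symm))
    (pow_ne_zero _ (ee'_ne_zero hq0 m))) (fun hG => ?_)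
  have hgm := geom_sum_mul q (b + 1)
  rw [hG, zero_mul] at hgm
  exact hq (b + 1) (Nat.succ_pos b) (by linear_combination -hgm)

lemma smul_mem_iff (I : TwoSidedIdeal (LWeyl K n q)) {c : K} (hc : c ≠ 0) {u : LWeyl K n q} :
    c • u ∈ I ↔ u ∈ I := by
  constructor
  · intro h
    have hu : u = c⁻¹ • (c • u) := (inv_smul_smul₀ hc u).symm
    rw [hu, Algebra.smul_def]
    exact I.mul_mem_left _ _ h
  · intro h
    rw [Algebra.smul_def]
    exact I.mul_mem_left _ _ h


lemma main (hq0 : q ≠ 0) (hq : NotRootOfUnity q) (I : TwoSidedIdeal (LWeyl K n q)) :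
    ∀ N : ℕ, ∀ m : ℕ, ∀ b : ℕ → ℕ, m + 1 ≤ n →
      (∑ k ∈ Finset.range m, (k + 1) * b (k + 1)) + m ≤ N →
      Wm K n q m b ∈ I → (1 : LWeyl K n q) ∈ I := by
  intro N
  induction N with
  | zero =>
      intro m b hm hN hW
      have hm0 : m = 0 := Nat.eq_zero_of_le_zero (le_trans (Nat.le_add_left m _) hN)
      subst hm0
      rwa [Wm_zero] at hW
  | succ N ih =>
      intro m b hm hN hW
      match m with
      | 0 => rwa [Wm_zero] at hW
      | (t + 1) =>
        rcases Nat.eq_zero_or_pos (b (t + 1)) with hb | hb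
        · refine ih t b (by omega) ?_ ?_
          · rw [Finset.sum_range_succ, hb, Nat.mul_zero, Nat.add_zero] at hN
            linarith
          · rwa [Wm_succ, hb, pow_zero, mul_one] at hW
        · obtain ⟨B, hB⟩ : ∃ B, b (t + 1) = B + 1 := ⟨b (t + 1) - 1, by omega⟩
          have hm1 : t + 1 + 1 ≤ n := by omega
          obtain ⟨γ, hγ, hcm⟩ := Wm_comm hq0 b (t + 1 + 1) hm1 t (by omega)
          have hBP := lemBpow hq0 (t + 1) (by omega) hm1 B
          rw [show t + 1 - 1 = t from rfl] at hBP
          -- the new exponent vector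
          set b' : ℕ → ℕ := fun k => if k = t + 1 then B else if k = t then b k + 1 else b k
            with hb'
          have hbp : b' (t + 1) = B := by rw [hb']; simp
          have habs : Wm K n q (t + 1) b' =
              Wm K n q t b * (Zz K n q t * Zz K n q (t + 1) ^ B) := by
            rw [Wm_succ, hbp,
              Wm_congr t b' (fun k => if k = t then b k + 1 else b k)
                (fun k hk => by rw [hb']; simp only; rw [if_neg (by omega)]),
              ← Wm_absorb, mul_assoc]
          have e1 : Wm K n q (t + 1) b * Lgen K n q (t + 1 + 1) =
              (ee q (t + 1) ^ (B + 1) * γ) •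
                (Lgen K n q (t + 1 + 1) * Wm K n q (t + 1) b) +
              ((1 - q) * ee' q (t + 1) ^ B * (∑ i ∈ Finset.range (B + 1), q ^ i)) •
                Wm K n q (t + 1) b' := by
            rw [habs, Wm_succ, hB]
            rw [mul_assoc, hBP, mul_add, mul_smul_comm, mul_smul_comm, ← mul_assoc, hcm]
            simp only [smul_mul_assoc, smul_smul, mul_assoc]
          have hsub : ((1 - q) * ee' q (t + 1) ^ B * (∑ i ∈ Finset.range (B + 1), q ^ i)) •
              Wm K n q (t + 1) b' ∈ I := by
            have h1 : Wm K n q (t + 1) b * Lgen K n q (t + 1 + 1) ∈ I :=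
              I.mul_mem_right _ _ hW
            have h2 : (ee q (t + 1) ^ (B + 1) * γ) •
                (Lgen K n q (t + 1 + 1) * Wm K n q (t + 1) b) ∈ I := by
              rw [Algebra.smul_def]
              exact I.mul_mem_left _ _ (I.mul_mem_left _ _ hW)
            have h3 := sub_mem h1 h2
            rwa [e1, add_sub_cancel_left] at h3
          have hW' : Wm K n q (t + 1) b' ∈ I :=
            (smul_mem_iff I (kappa_ne_zero hq0 hq (t + 1) B)).mp hsub
          refine ih (t + 1) b' (by omega) ?_ hW'
          have hsum : ∑ k ∈ Finset.range t, (k + 1) * b' (k + 1) =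
              (∑ k ∈ Finset.range t, (k + 1) * b (k + 1)) + t := by
            rcases Nat.eq_zero_or_pos t with ht | ht
            · subst ht; simp
            · have hterm : ∀ k ∈ Finset.range t, (k + 1) * b' (k + 1) =
                  (k + 1) * b (k + 1) + (if k = t - 1 then t else 0) := by
                intro k hk
                simp only [Finset.mem_range] at hk
                by_cases hkt : k = t - 1
                · have hk1 : k + 1 = t := by omega
                  rw [if_pos hkt, hb']
                  simp only
                  rw [if_neg (by omega), if_pos hk1, Nat.mul_succ, hk1]
                · rw [if_neg hkt, hb']
                  simp only
                  rw [if_neg (by omega), if_neg (by omega)]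
                  exact (Nat.add_zero _).symm
              rw [Finset.sum_congr rfl hterm, Finset.sum_add_distrib,
                Finset.sum_ite_eq' (Finset.range t) (t - 1) (fun _ => t),
                if_pos (Finset.mem_range.mpr (by omega))]
          rw [Finset.sum_range_succ, hsum, hbp]
          rw [Finset.sum_range_succ, hB, Nat.mul_succ] at hN
          linarith

end S9

/-- Proposition 3.12: suppose `q` is not a root of unity and let
`w = f z_1^{a_1} ⋯ z_{n-1}^{a_{n-1}}` with `f ∈ K^*` and `a_i ∈ ℕ`.  Then the two-sided
ideal of `L = L_n^q` generated by `w` is all of `L`, and no prime (two-sided) ideal of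
`L` contains `w`. -/


theorem stmt9 (K : Type) [Field K] [IsAlgClosed K] (n : ℕ) (hn : 2 ≤ n) (q : K)
    (hq0 : q ≠ 0) (hq : NotRootOfUnity q) (f : K) (hf : f ≠ 0) (a : ℕ → ℕ) :
    let x : ℕ → LWeyl K n q := Lgen K n q
    let z : ℕ → LWeyl K n q := fun j => zsh x (j + 1)
    let w : LWeyl K n q :=
      algebraMap K (LWeyl K n q) f *
        ((List.range (n - 1)).map (fun k => z (k + 1) ^ a (k + 1))).prod
    TwoSidedIdeal.span {w} = ⊤ ∧
      ∀ P : TwoSidedIdeal (LWeyl K n q), IsTwoSidedPrime P → w ∉ P := by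

  intro x z w
  have key : ∀ I : TwoSidedIdeal (LWeyl K n q), w ∈ I → (1 : LWeyl K n q) ∈ I := by
    intro I hwI
    have hprod : ((List.range (n - 1)).map (fun k => z (k + 1) ^ a (k + 1))).prod =
        S9.Wm K n q (n - 1) a := rfl
    have hWa : S9.Wm K n q (n - 1) a ∈ I := by
      have heq : S9.Wm K n q (n - 1) a = algebraMap K (LWeyl K n q) f⁻¹ * w := by
        show S9.Wm K n q (n - 1) a = algebraMap K (LWeyl K n q) f⁻¹ *
          (algebraMap K (LWeyl K n q) f *
            ((List.range (n - 1)).map (fun k => z (k + 1) ^ a (k + 1))).prod)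
        rw [hprod, ← mul_assoc, ← map_mul, inv_mul_cancel₀ hf, map_one, one_mul]
      rw [heq]
      exact I.mul_mem_left _ _ hwI
    exact S9.main hq0 hq I
      ((∑ k ∈ Finset.range (n - 1), (k + 1) * a (k + 1)) + (n - 1)) (n - 1) a
      (by omega) le_rfl hWa
  constructor
  · exact TwoSidedIdeal.eq_top _ (key _ (TwoSidedIdeal.subset_span (Set.mem_singleton w)))
  · intro P hP hwP
    exact hP.1 (TwoSidedIdeal.eq_top _ (key P hwP))

end
end

section
/- In C_n^q, the element Ω = z_{n-1} x_n - z_{n-2} - q θ(z_{n-2}) satisfies θ(Ω) = Ω and Ω is central in C_n^q. -/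
noncomputable section

open FreeAlgebra

section Aux

variable {K : Type} [Field K] {R : Type} [Ring R] [Algebra K R]

lemma zsh_succ (x : ℕ → R) (k : ℕ) :
    zsh x (k+2) = zsh x (k+1) * x (k+1) - zsh x k := rfl
lemma zsh_zero (x : ℕ → R) : zsh x 0 = 0 := rfl
lemma zsh_one (x : ℕ → R) : zsh x 1 = 1 := rfl
lemma zsh_two (x : ℕ → R) : zsh x 2 = x 1 := by
  have := zsh_succ x 0
  simpa [zsh_zero, zsh_one] using this

lemma zsh_first (x : ℕ → R) :
    ∀ J, zsh x (J+2) = x 1 * zsh (fun m => x (m+1)) (J+1) - zsh (fun m => x (m+2)) J := by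
  have key : ∀ J, (zsh x (J+2) = x 1 * zsh (fun m => x (m+1)) (J+1) - zsh (fun m => x (m+2)) J)
      ∧ (zsh x (J+3) = x 1 * zsh (fun m => x (m+1)) (J+2) - zsh (fun m => x (m+2)) (J+1)) := by
    intro J
    induction J with
    | zero =>
      constructor
      · simp [zsh_two, zsh_one, zsh_zero]
      · show zsh x (1+2) = x 1 * zsh (fun m => x (m+1)) (1+1) - zsh (fun m => x (m+2)) (0+1)
        rw [zsh_succ]
        simp [zsh_two, zsh_one, mul_sub]
    | succ k ih =>
      refine ⟨ih.2, ?_⟩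
      have h1 : zsh x (k+4) = zsh x (k+3) * x (k+3) - zsh x (k+2) := zsh_succ x (k+2)
      have h2 : zsh (fun m => x (m+1)) (k+3) =
          zsh (fun m => x (m+1)) (k+2) * x (k+3) - zsh (fun m => x (m+1)) (k+1) := by
        have := zsh_succ (fun m => x (m+1)) (k+1)
        simpa [show k+1+1+1 = k+3 by omega] using this
      have h3 : zsh (fun m => x (m+2)) (k+2) =
          zsh (fun m => x (m+2)) (k+1) * x (k+3) - zsh (fun m => x (m+2)) k := by
        have := zsh_succ (fun m => x (m+2)) k
        simpa [show k+1+2 = k+3 by omega] using this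
      have goal4 : zsh x (k+1+3) = zsh x (k+4) := by norm_num
      rw [goal4, h1, ih.1, ih.2, h2, h3]
      noncomm_ring
  exact fun J => (key J).1


/-- below-adjacent commutation -/
lemma GBA (q : K) (n : ℕ) (x : ℕ → R)
    (radj : ∀ i, 1 ≤ i → i + 1 ≤ n → x i * x (i+1) = q • (x (i+1) * x i) + (1-q) • (1:R))
    (rodd : ∀ i j, 1 ≤ i → i + 1 < j → j ≤ n → Odd (j - i) → x i * x j = q • (x j * x i))
    (reven : ∀ i j, 1 ≤ i → i + 1 < j → j + 1 ≤ n → Even (j - i) → q • (x i * x j) = x j * x i)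
    (s : ℕ) (hs : 1 ≤ s) :
    ∀ J, s + J + 1 ≤ n →
      x s * zsh (fun m => x (m + s)) (J+1) =
        q ^ (J % 2) • (zsh (fun m => x (m + s)) (J+1) * x s)
          + (1-q) • zsh (fun m => x (m + s + 1)) J := by
  set y : ℕ → R := fun m => x (m + s) with hy
  set y' : ℕ → R := fun m => x (m + s + 1) with hy'
  have key : ∀ J,
      (s + J + 1 ≤ n → x s * zsh y (J+1) =
        q ^ (J % 2) • (zsh y (J+1) * x s) + (1-q) • zsh y' J)
      ∧ (s + (J+1) + 1 ≤ n → x s * zsh y (J+2) =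
        q ^ ((J+1) % 2) • (zsh y (J+2) * x s) + (1-q) • zsh y' (J+1)) := by
    intro J
    induction J with
    | zero =>
      constructor
      · intro h
        simp [zsh_one, zsh_zero]
      · intro h
        have h2 : zsh y 2 = x (1 + s) := zsh_two y
        rw [h2, zsh_one]
        have := radj s hs (by omega)
        rw [show 1 + s = s + 1 by omega]
        simpa using this
    | succ k ih =>
      refine ⟨ih.2, ?_⟩
      intro h
      have IH1 := ih.2 (by omega)
      have IH0 := ih.1 (by omega)
      have hA : zsh y (k+3) = zsh y (k+2) * x (k+2+s) - zsh y (k+1) := zsh_succ y (k+1)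
      have hB : zsh y' (k+2) = zsh y' (k+1) * x (k+2+s) - zsh y' k := by
        have := zsh_succ y' k
        rw [hy'] at this
        simpa [show k+1+s+1 = k+2+s by omega] using this
      have hmod : (k+1+1) % 2 = k % 2 := by omega
      rw [show k+1+2 = k+3 by omega, hmod, hA, hB]
      rw [mul_sub, ← mul_assoc, IH1, IH0]
      rcases Nat.even_or_odd k with hk | hk
      · have e1 : (k+1) % 2 = 1 := by
          rcases hk with ⟨c, hc⟩; omega
        have e0 : k % 2 = 0 := by rcases hk with ⟨c, hc⟩; omega
        simp only [e1, e0, pow_one, pow_zero, one_smul]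
        have hrel : q • (x s * x (k+2+s)) = x (k+2+s) * x s := by
          apply reven s (k+2+s) hs (by omega) (by omega)
          rw [show k+2+s-s = k+2 by omega]
          rcases hk with ⟨c, hc⟩; exact ⟨c+1, by omega⟩
        calc (q • (zsh y (k+2) * x s) + (1-q) • zsh y' (k+1)) * x (k+2+s)
              - (zsh y (k+1) * x s + (1-q) • zsh y' k)
            = zsh y (k+2) * (q • (x s * x (k+2+s))) + (1-q) • (zsh y' (k+1) * x (k+2+s))
              - zsh y (k+1) * x s - (1-q) • zsh y' k := by
              simp only [add_mul, smul_mul_assoc, mul_assoc, mul_smul_comm]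
              abel
          _ = zsh y (k+2) * (x (k+2+s) * x s) + (1-q) • (zsh y' (k+1) * x (k+2+s))
              - zsh y (k+1) * x s - (1-q) • zsh y' k := by rw [hrel]
          _ = (zsh y (k+2) * x (k+2+s) - zsh y (k+1)) * x s
              + (1-q) • (zsh y' (k+1) * x (k+2+s) - zsh y' k) := by
              simp only [sub_mul, smul_sub, mul_assoc]
              abel
      · have e1 : (k+1) % 2 = 0 := by rcases hk with ⟨c, hc⟩; omega
        have e0 : k % 2 = 1 := by rcases hk with ⟨c, hc⟩; omega
        simp only [e1, e0, pow_one, pow_zero, one_smul]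
        have hrel : x s * x (k+2+s) = q • (x (k+2+s) * x s) := by
          apply rodd s (k+2+s) hs (by omega) (by omega)
          rw [show k+2+s-s = k+2 by omega]
          rcases hk with ⟨c, hc⟩; exact ⟨c+1, by omega⟩
        calc (zsh y (k+2) * x s + (1-q) • zsh y' (k+1)) * x (k+2+s)
              - (q • (zsh y (k+1) * x s) + (1-q) • zsh y' k)
            = zsh y (k+2) * (x s * x (k+2+s)) + (1-q) • (zsh y' (k+1) * x (k+2+s))
              - q • (zsh y (k+1) * x s) - (1-q) • zsh y' k := by
              simp only [add_mul, smul_mul_assoc, mul_assoc]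
              abel
          _ = q • (zsh y (k+2) * (x (k+2+s) * x s)) + (1-q) • (zsh y' (k+1) * x (k+2+s))
              - q • (zsh y (k+1) * x s) - (1-q) • zsh y' k := by rw [hrel, mul_smul_comm]
          _ = q • ((zsh y (k+2) * x (k+2+s) - zsh y (k+1)) * x s)
              + (1-q) • (zsh y' (k+1) * x (k+2+s) - zsh y' k) := by
              simp only [sub_mul, smul_sub, mul_assoc]
              abel
  exact fun J hJ => (key J).1 hJ


/-- below-far commutation of `x 1` with `zsh` built from `x 3, x 4, …`. -/
lemma GBF (q : K) (hq0 : q ≠ 0) (n : ℕ) (x : ℕ → R)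
    (rodd : ∀ i j, 1 ≤ i → i + 1 < j → j ≤ n → Odd (j - i) → x i * x j = q • (x j * x i))
    (reven : ∀ i j, 1 ≤ i → i + 1 < j → j + 1 ≤ n → Even (j - i) → q • (x i * x j) = x j * x i) :
    ∀ J, 3 + J ≤ n →
      q ^ (J % 2) • (x 1 * zsh (fun m => x (m + 2)) (J+1)) =
        zsh (fun m => x (m + 2)) (J+1) * x 1 := by
  set y : ℕ → R := fun m => x (m + 2) with hy
  have cancel : ∀ a b : R, q • a = q • b → a = b := by
    intro a b hab
    have := congrArg (fun t => q⁻¹ • t) hab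
    simpa [smul_smul, inv_mul_cancel₀ hq0] using this
  have key : ∀ J,
      (3 + J ≤ n → q ^ (J % 2) • (x 1 * zsh y (J+1)) = zsh y (J+1) * x 1)
      ∧ (3 + (J+1) ≤ n → q ^ ((J+1) % 2) • (x 1 * zsh y (J+2)) = zsh y (J+2) * x 1) := by
    intro J
    induction J with
    | zero =>
      constructor
      · intro h; simp [zsh_one]
      · intro h
        rw [zsh_two y]
        show q ^ (1 % 2) • (x 1 * x (1+2)) = x (1+2) * x 1
        rw [show (1:ℕ) % 2 = 1 by norm_num, pow_one]
        exact reven 1 3 le_rfl (by norm_num) (by omega) (by norm_num)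
    | succ k ih =>
      refine ⟨ih.2, ?_⟩
      intro h
      have IH1 := ih.2 (by omega)
      have IH0 := ih.1 (by omega)
      have hC : zsh y (k+3) = zsh y (k+2) * x (k+4) - zsh y (k+1) := by
        have := zsh_succ y (k+1)
        simpa [show k+1+1+2 = k+4 by omega] using this
      have hmod : (k+1+1) % 2 = k % 2 := by omega
      rw [show k+1+2 = k+3 by omega, hmod, hC]
      rcases Nat.even_or_odd k with hk | hk
      · have e1 : (k+1) % 2 = 1 := by rcases hk with ⟨c, hc⟩; omega
        have e0 : k % 2 = 0 := by rcases hk with ⟨c, hc⟩; omega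
        simp only [e1, pow_one] at IH1
        simp only [e0, pow_zero, one_smul] at IH0 ⊢
        have hrel : x 1 * x (k+4) = q • (x (k+4) * x 1) := by
          apply rodd 1 (k+4) le_rfl (by omega) (by omega)
          rcases hk with ⟨c, hc⟩; exact ⟨c+1, by omega⟩
        apply cancel
        calc q • (x 1 * (zsh y (k+2) * x (k+4) - zsh y (k+1)))
            = (q • (x 1 * zsh y (k+2))) * x (k+4) - q • (x 1 * zsh y (k+1)) := by
              simp only [mul_sub, smul_sub, ← mul_assoc, smul_mul_assoc]
          _ = zsh y (k+2) * (x 1 * x (k+4)) - q • (zsh y (k+1) * x 1) := by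
              rw [IH1, IH0, mul_assoc]
          _ = q • (zsh y (k+2) * (x (k+4) * x 1)) - q • (zsh y (k+1) * x 1) := by
              rw [hrel, mul_smul_comm]
          _ = q • ((zsh y (k+2) * x (k+4) - zsh y (k+1)) * x 1) := by
              simp only [sub_mul, smul_sub, mul_assoc]
      · have e1 : (k+1) % 2 = 0 := by rcases hk with ⟨c, hc⟩; omega
        have e0 : k % 2 = 1 := by rcases hk with ⟨c, hc⟩; omega
        simp only [e1, pow_zero, one_smul] at IH1
        simp only [e0, pow_one] at IH0 ⊢
        have hrel : q • (x 1 * x (k+4)) = x (k+4) * x 1 := by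
          apply reven 1 (k+4) le_rfl (by omega) (by omega)
          rcases hk with ⟨c, hc⟩; exact ⟨c+2, by omega⟩
        calc q • (x 1 * (zsh y (k+2) * x (k+4) - zsh y (k+1)))
            = q • ((x 1 * zsh y (k+2)) * x (k+4)) - q • (x 1 * zsh y (k+1)) := by
              simp only [mul_sub, smul_sub, ← mul_assoc]
          _ = q • ((zsh y (k+2) * x 1) * x (k+4)) - zsh y (k+1) * x 1 := by rw [IH1, IH0]
          _ = zsh y (k+2) * (q • (x 1 * x (k+4))) - zsh y (k+1) * x 1 := by
              rw [mul_assoc, mul_smul_comm]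
          _ = zsh y (k+2) * (x (k+4) * x 1) - zsh y (k+1) * x 1 := by rw [hrel]
          _ = (zsh y (k+2) * x (k+4) - zsh y (k+1)) * x 1 := by
              simp only [sub_mul, mul_assoc]
  exact fun J hJ => (key J).1 hJ

end Aux

/-- Lemma 4.1(iii),(iv): in `C_n^q` the element `Ω = z_{n-1} x_n - z_{n-2} - q θ(z_{n-2})`
satisfies `θ(Ω) = Ω` and `Ω` is central, where `θ` is the `K`-algebra automorphism with
`θ(x_i) = x_{i+1}` (`1 ≤ i ≤ n-1`) and `θ(x_n) = x_1`. -/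
theorem stmt11 (K : Type) [Field K] [IsAlgClosed K] (n : ℕ) (hn : 3 ≤ n) (hodd : Odd n)
    (q : K) (hq0 : q ≠ 0)
    (θ : CWeyl K n q ≃ₐ[K] CWeyl K n q)
    (hθ : ∀ m : ℕ, 1 ≤ m → m < n → θ (Cgen K n q m) = Cgen K n q (m + 1))
    (hθn : θ (Cgen K n q n) = Cgen K n q 1) :
    let x : ℕ → CWeyl K n q := Cgen K n q
    let z : ℕ → CWeyl K n q := fun j => zsh x (j + 1)
    let Ω : CWeyl K n q := z (n - 1) * x n - z (n - 2) - q • θ (z (n - 2))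
    θ Ω = Ω ∧ ∀ a : CWeyl K n q, Ω * a = a * Ω := by
  intro x z Ω
  obtain ⟨j, rfl⟩ : ∃ j, n = j + 3 := ⟨n - 3, by omega⟩
  have hje : Even j := by
    rcases hodd with ⟨t, ht⟩; exact ⟨t - 1, by omega⟩
  have hj2 : j % 2 = 0 := Nat.even_iff.mp hje
  have hxdef : x = Cgen K (j+3) q := rfl
  -- generators
  have hgen : ∀ i : Fin (j+3),
      RingQuot.mkAlgHom K (CRel K (j+3) q) (ι K i) = x (i.1+1) := by
    intro i
    rw [hxdef]
    simp only [Cgen, Nat.add_sub_cancel]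
    rw [dif_pos i.isLt]
  have hgen' : ∀ m : ℕ, 1 ≤ m → m ≤ j + 3 → ∀ (h : m - 1 < j+3),
      RingQuot.mkAlgHom K (CRel K (j+3) q) (ι K ⟨m-1, h⟩) = x m := by
    intro m h1 h2 h
    have := hgen ⟨m-1, h⟩
    simpa [show m-1+1 = m by omega] using this
  -- relations
  have radj : ∀ i, 1 ≤ i → i + 1 ≤ j+3 →
      x i * x (i+1) = q • (x (i+1) * x i) + (1-q) • 1 := by
    intro i h1 h2
    have hr := RingQuot.mkAlgHom_rel K
      (CRel.adj (K := K) (n := j+3) (q := q) ⟨i-1, by omega⟩ ⟨i, by omega⟩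
        (by simp only [Fin.val_mk]; omega))
    simp only [map_mul, map_add, map_smul, AlgHom.commutes] at hr
    have hb := hgen ⟨i, by omega⟩
    simp only [Fin.val_mk] at hb
    rw [hgen' i h1 (by omega), hb] at hr
    rwa [Algebra.algebraMap_eq_smul_one] at hr
  have rodd : ∀ i k, 1 ≤ i → i + 1 < k → k ≤ j+3 → Odd (k - i) →
      x i * x k = q • (x k * x i) := by
    intro i k h1 h2 h3 h4
    have hr := RingQuot.mkAlgHom_rel K
      (CRel.far_odd (K := K) (n := j+3) (q := q) ⟨i-1, by omega⟩ ⟨k-1, by omega⟩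
        (by simp only [Fin.val_mk]; omega)
        (by simp only [Fin.val_mk]; rw [show k-1-(i-1) = k-i by omega]; exact h4))
    simp only [map_mul, map_smul] at hr
    rw [hgen' i h1 (by omega) (by omega), hgen' k (by omega) h3 (by omega)] at hr
    exact hr
  have reven : ∀ i k, 1 ≤ i → i + 1 < k → k + 1 ≤ j+3 → Even (k - i) →
      q • (x i * x k) = x k * x i := by
    intro i k h1 h2 h3 h4
    have hr := RingQuot.mkAlgHom_rel K
      (CRel.far_even (K := K) (n := j+3) (q := q) ⟨i-1, by omega⟩ ⟨k-1, by omega⟩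
        (by simp only [Fin.val_mk]; omega) (by simp only [Fin.val_mk]; omega)
        (by simp only [Fin.val_mk]; rw [show k-1-(i-1) = k-i by omega]; exact h4))
    simp only [map_mul, map_smul] at hr
    rw [hgen' i h1 (by omega) (by omega), hgen' k (by omega) (by omega) (by omega)] at hr
    rw [hr, smul_smul, mul_inv_cancel₀ hq0, one_smul]
  have rcyc : x (j+3) * x 1 = q • (x 1 * x (j+3)) + (1-q) • 1 := by
    have hr := RingQuot.mkAlgHom_rel K
      (CRel.cyc (K := K) (n := j+3) (q := q) ⟨0, by omega⟩ ⟨j+2, by omega⟩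
        (by simp) (by simp only [Fin.val_mk]; omega))
    simp only [map_mul, map_add, map_smul, AlgHom.commutes] at hr
    have ha := hgen ⟨0, by omega⟩
    have hb := hgen ⟨j+2, by omega⟩
    simp only [Fin.val_mk] at ha hb
    rw [ha, hb, Algebra.algebraMap_eq_smul_one] at hr
    simpa [show j+2+1 = j+3 from by omega] using hr
  -- theta on zsh families
  have theta_zsh : ∀ s k, s + k ≤ j + 3 →
      θ (zsh (fun m => x (m+s)) k) = zsh (fun m => x (m+s+1)) k := by
    intro s k
    have key : ∀ k, (s + k ≤ j+3 → θ (zsh (fun m => x (m+s)) k) = zsh (fun m => x (m+s+1)) k)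
        ∧ (s + (k+1) ≤ j+3 → θ (zsh (fun m => x (m+s)) (k+1)) = zsh (fun m => x (m+s+1)) (k+1)) := by
      intro k
      induction k with
      | zero =>
        constructor
        · intro _; simp [zsh_zero]
        · intro _; simp [zsh_one]
      | succ t iht =>
        refine ⟨iht.2, ?_⟩
        intro hle
        rw [zsh_succ, map_sub, map_mul, (iht.2 (by omega)), (iht.1 (by omega))]
        have hθt : θ (x (t+1+s)) = x (t+1+s+1) := by
          rw [hxdef]; exact hθ (t+1+s) (by omega) (by omega)
        rw [hθt]
        exact (zsh_succ (fun m => x (m+s+1)) t).symm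
    exact (key k).1
  have hsh0 : (fun m => x (m+0)) = x := by funext m; norm_num
  have hsh1 : (fun m => x (m+0+1)) = (fun m => x (m+1)) := by funext m; norm_num
  have hsh2 : (fun m => x (m+1+1)) = (fun m => x (m+2)) := by funext m; norm_num
  have th0 : ∀ k, k ≤ j+3 → θ (zsh x k) = zsh (fun m => x (m+1)) k := by
    intro k hk
    have := theta_zsh 0 k (by omega)
    rwa [hsh0, hsh1] at this
  have th1 : ∀ k, k+1 ≤ j+3 → θ (zsh (fun m => x (m+1)) k) = zsh (fun m => x (m+2)) k := by
    intro k hk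
    have := theta_zsh 1 k (by omega)
    rwa [hsh2] at this
  -- abbreviations
  set e : CWeyl K (j+3) q := x 1 with he
  set X : CWeyl K (j+3) q := x (j+3) with hX
  set a2 : CWeyl K (j+3) q := zsh x (j+3) with ha2
  set a1 : CWeyl K (j+3) q := zsh x (j+2) with ha1
  set b3 : CWeyl K (j+3) q := zsh (fun m => x (m+1)) (j+3) with hb3
  set b2 : CWeyl K (j+3) q := zsh (fun m => x (m+1)) (j+2) with hb2
  set b1 : CWeyl K (j+3) q := zsh (fun m => x (m+1)) (j+1) with hb1
  set c2 : CWeyl K (j+3) q := zsh (fun m => x (m+2)) (j+2) with hc2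
  set c1 : CWeyl K (j+3) q := zsh (fun m => x (m+2)) (j+1) with hc1
  set c0 : CWeyl K (j+3) q := zsh (fun m => x (m+2)) j with hc0
  -- structural facts
  have F9 : b3 = b2 * X - b1 := by
    rw [hb3, hb2, hb1, hX]
    have := zsh_succ (fun m => x (m+1)) (j+1)
    simpa [show j+1+1+1 = j+3 from by omega] using this
  have F10 : c2 = c1 * X - c0 := by
    rw [hc2, hc1, hc0, hX]
    have := zsh_succ (fun m => x (m+2)) j
    simpa [show j+1+2 = j+3 from by omega] using this
  have F1 : a2 * X - a1 = e * b3 - c2 := by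
    rw [ha2, ha1, hb3, hc2, hX, he]
    have h1 := zsh_first x (j+2)
    have h2 : zsh x (j+4) = zsh x (j+3) * x (j+3) - zsh x (j+2) := by
      have := zsh_succ x (j+2)
      simpa [show j+2+1 = j+3 from by omega, show j+2+2 = j+4 from by omega] using this
    simp only [show j+2+2 = j+4 from by omega, show j+2+1 = j+3 from by omega] at h1
    rw [← h2, h1]
  have F2 : a2 = e * b2 - c1 := by
    rw [ha2, hb2, hc1, he]
    have h1 := zsh_first x (j+1)
    simp only [show j+1+2 = j+3 from by omega, show j+1+1 = j+2 from by omega] at h1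
    exact h1
  have F3 : a1 = e * b1 - c0 := by
    rw [ha1, hb1, hc0, he]
    exact zsh_first x j
  -- commutation facts
  have F4 : e * b2 = q • (b2 * e) + (1-q) • c1 := by
    rw [he, hb2, hc1]
    have := GBA q (j+3) x radj rodd reven 1 le_rfl (j+1) (by omega)
    rw [hsh2] at this
    simp only [show (j+1) % 2 = 1 from by omega] at this
    simpa [show j+1+1 = j+2 from by omega] using this
  have F5 : e * b1 = b1 * e + (1-q) • c0 := by
    rw [he, hb1, hc0]
    have := GBA q (j+3) x radj rodd reven 1 le_rfl j (by omega)
    rw [hsh2] at this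
    simp only [show j % 2 = 0 from by omega] at this
    simpa using this
  have F6 : e * c1 = c1 * e := by
    rw [he, hc1]
    have := GBF q hq0 (j+3) x rodd reven j (by omega)
    simp only [show j % 2 = 0 from by omega] at this
    simpa using this
  have F7 : q • (e * c0) = c0 * e := by
    rcases Nat.eq_zero_or_pos j with h0 | hpos
    · subst h0; simp [hc0, zsh_zero]
    · obtain ⟨k, rfl⟩ : ∃ k, j = k + 1 := ⟨j - 1, by omega⟩
      rw [he, hc0]
      have := GBF q hq0 (k+1+3) x rodd reven k (by omega)
      simp only [show k % 2 = 1 from by omega] at this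
      simpa using this
  have F8 : X * e = q • (e * X) + (1-q) • 1 := by
    rw [he, hX]; exact rcyc
  have F4' : q • (b2 * e) = e * b2 - (1-q) • c1 := by rw [F4]; abel
  have F5' : b1 * e = e * b1 - (1-q) • c0 := by rw [F5]; abel
  have key2 : a2 = q • (b2 * e) - q • c1 := by
    rw [F2, F4]; module
  -- Omega explicitly
  have hOm : Ω = a2 * X - a1 - q • b2 := by
    show z (j+3-1) * x (j+3) - z (j+3-2) - q • θ (z (j+3-2)) = a2 * X - a1 - q • b2
    have hz1 : z (j+3-1) = a2 := by
      show zsh x (j+3-1+1) = a2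
      rw [ha2, show j+3-1+1 = j+3 from by omega]
    have hz2 : z (j+3-2) = a1 := by
      show zsh x (j+3-2+1) = a1
      rw [ha1, show j+3-2+1 = j+2 from by omega]
    rw [hz1, hz2, hX, th0 (j+2) (by omega), hb2]
  -- Part 1 : θ Ω = Ω
  have hstep : q • (b2 * (e * X)) = e * (b2 * X) - (1-q) • (c1 * X) := by
    have h := congrArg (fun t => t * X) F4'
    simpa [smul_mul_assoc, sub_mul, mul_assoc] using h
  have keyT1 : b3 * e = e * b3 - (1-q) • c2 + (1-q) • b2 := by
    rw [F9, F10]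
    simp only [sub_mul, mul_sub, mul_assoc, smul_sub]
    rw [F8, F5']
    simp only [mul_add, mul_smul_comm, mul_one]
    rw [hstep]
    module
  have hT1 : θ Ω = Ω := by
    rw [hOm]
    simp only [map_sub, map_mul, map_smul]
    have hθX : θ X = e := by rw [hX, he, hxdef]; exact hθn
    have hθa2 : θ a2 = b3 := by rw [ha2, hb3]; exact th0 (j+3) le_rfl
    have hθa1 : θ a1 = b2 := by rw [ha1, hb2]; exact th0 (j+2) (by omega)
    have hθb2 : θ b2 = c2 := by rw [hb2, hc2]; exact th1 (j+2) (by omega)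
    rw [hθX, hθa2, hθa1, hθb2, F1, keyT1]
    module
  -- Part 2 : Ω commutes with x 1
  have hA1 : e * a1 = a1 * e := by
    rw [F3]
    rw [mul_sub, sub_mul, mul_assoc, F5', ← F7]
    simp only [mul_sub, mul_smul_comm]
    module
  have hA2 : e * a2 = q • (a2 * e) := by
    rw [F2]
    calc e * (e * b2 - c1) = e * (e * b2) - e * c1 := by rw [mul_sub]
      _ = q • ((e * b2 - c1) * e) := by
          rw [sub_mul, smul_sub, mul_assoc, ← F6, ← mul_smul_comm, F4']
          simp only [mul_sub, mul_smul_comm]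
          module
  have hL : (a2 * X - a1 - q • b2) * e
      = q • (a2 * (e * X)) + (1-q) • a2 - a1 * e - q • (b2 * e) := by
    rw [sub_mul, sub_mul, smul_mul_assoc, mul_assoc, F8]
    simp only [mul_add, mul_smul_comm, mul_one]
    try module
  have hR : e * (a2 * X - a1 - q • b2)
      = q • (a2 * (e * X)) - a1 * e - (q*q) • (b2 * e) - (q*(1-q)) • c1 := by
    simp only [mul_sub, mul_smul_comm]
    rw [← mul_assoc, hA2, hA1, F4]
    simp only [smul_mul_assoc, mul_assoc, smul_add, smul_smul]
    module
  have hfin : q • (a2 * (e * X)) + (1-q) • a2 - a1 * e - q • (b2 * e)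
      = q • (a2 * (e * X)) - a1 * e - (q*q) • (b2 * e) - (q*(1-q)) • c1 := by
    rw [key2]
    module
  have hcomm1 : Ω * e = e * Ω := by
    rw [hOm, hL, hfin, ← hR]
  -- commutes with all generators
  have hcommgen : ∀ k, k + 1 ≤ j + 3 → Ω * x (k+1) = x (k+1) * Ω := by
    intro k
    induction k with
    | zero => intro _; simpa [he] using hcomm1
    | succ t iht =>
      intro hle
      have h1 := iht (by omega)
      have h2 := congrArg θ h1
      rw [map_mul, map_mul, hT1] at h2
      have h3 : θ (x (t+1)) = x (t+1+1) := by
        rw [hxdef]; exact hθ (t+1) (by omega) (by omega)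
      rwa [h3] at h2
  have hcent : ∀ a : CWeyl K (j+3) q, Ω * a = a * Ω := by
    intro a
    obtain ⟨b, rfl⟩ := RingQuot.mkAlgHom_surjective K (CRel K (j+3) q) a
    induction b using FreeAlgebra.induction with
    | grade0 r =>
      rw [AlgHom.commutes]
      exact (Algebra.commutes r Ω).symm
    | grade1 i =>
      rw [hgen i]
      exact hcommgen i.1 (by omega)
    | mul u v hu hv =>
      rw [map_mul, ← mul_assoc, hu, mul_assoc, hv, mul_assoc]
    | add u v hu hv =>
      rw [map_add, mul_add, add_mul, hu, hv]
  exact ⟨hT1, hcent⟩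

end
end
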